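/- arXiv:2504.01149 — 4 statements merged into one kernel-verified Lean document; each statement's English description precedes it below -/
import Mathlib

section
/- Let p be a prime and P a Sylow p-subgroup of the symmetric group S_p. Then the number of (P,P)-double cosets of S_p of size p is p − 1, and the number of (P,P)-double cosets of size p² is ((p−1)! − (p−1))/p. -/
open Subgroup Equiv
open scoped Pointwise


theorem aux_card_sylow {p : ℕ} (hp : p.Prime) (P : Sylow p (Equiv.Perm (Fin p))) :
    Nat.card P.toSubgroup = p := by
  have : Fact p.Prime := ⟨hp⟩
  have hG : Nat.card (Equiv.Perm (Fin p)) = p.factorial := by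
    simp [Nat.card_eq_fintype_card, Fintype.card_perm, Fintype.card_fin]
  have hp1 := hp.one_lt
  have h := Sylow.card_eq_multiplicity P
  rw [hG] at h
  have h1 : p.factorial = p * (p-1).factorial := by
    obtain ⟨q, rfl⟩ : ∃ q, p = q + 1 := ⟨p - 1, by omega⟩
    simp [Nat.factorial_succ]
  have hf : (p.factorial).factorization p = 1 := by
    rw [h1, Nat.factorization_mul hp.pos.ne' (Nat.factorial_pos _).ne', Finsupp.coe_add,
      Pi.add_apply, Nat.Prime.factorization_self hp,
      Nat.factorization_factorial_eq_zero_of_lt (by omega)]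
  rw [hf, pow_one] at h
  exact h


theorem aux_centralizer {p : ℕ} (c : Equiv.Perm (Fin p))
    (hc : c.IsCycle) (hsupp : c.support = Finset.univ) :
    Subgroup.centralizer {c} = Subgroup.zpowers c := by
  have hmove : ∀ y, c y ≠ y := fun y =>
    Equiv.Perm.mem_support.mp (hsupp ▸ Finset.mem_univ y)
  apply le_antisymm
  · intro g hg
    rw [Subgroup.mem_centralizer_singleton_iff] at hg
    obtain ⟨x, hx, hsc⟩ := hc
    obtain ⟨k, hk⟩ := hsc (hmove (g x))
    rw [Subgroup.mem_zpowers_iff]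
    refine ⟨k, ?_⟩
    refine Equiv.ext fun y => ?_
    obtain ⟨i, hi⟩ := hsc (hmove y)
    have hcom : g * c ^ i = c ^ i * g := (Commute.zpow_right (show Commute g c from hg) i).eq
    calc (c ^ k) y = (c ^ k) ((c ^ i) x) := by rw [hi]
    _ = (c ^ i) ((c ^ k) x) := by
        rw [← Equiv.Perm.mul_apply, ← Equiv.Perm.mul_apply, ← zpow_add, ← zpow_add, add_comm]
    _ = (c ^ i) (g x) := by rw [hk]
    _ = g ((c ^ i) x) := by rw [← Equiv.Perm.mul_apply, ← hcom, Equiv.Perm.mul_apply]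
    _ = g y := by rw [hi]
  · intro g hg
    obtain ⟨k, rfl⟩ := Subgroup.mem_zpowers_iff.mp hg
    rw [Subgroup.mem_centralizer_singleton_iff]
    exact (Commute.zpow_left (Commute.refl c) k).eq


theorem aux_norm {p : ℕ} (hp : p.Prime) (c : Equiv.Perm (Fin p))
    (hc : c.IsCycle) (hsupp : c.support = Finset.univ)
    (hcard : Nat.card (Subgroup.zpowers c) = p) :
    Nat.card (Subgroup.normalizer ((Subgroup.zpowers c : Subgroup (Equiv.Perm (Fin p))) : Set (Equiv.Perm (Fin p)))) = p * (p - 1) := by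
  have hp1 := hp.one_lt
  set Q : Subgroup (Equiv.Perm (Fin p)) := Subgroup.zpowers c with hQ
  set N : Subgroup (Equiv.Perm (Fin p)) := Subgroup.normalizer (Q : Set (Equiv.Perm (Fin p))) with hN
  have horder : orderOf c = p := by rw [← Nat.card_zpowers]; exact hcard
  have hcent : Subgroup.centralizer {c} = Q := aux_centralizer c hc hsupp
  have hQle : Q ≤ N := Subgroup.le_normalizer
  -- the map to Q \ {1}
  have hfmem : ∀ g : N, (g : Equiv.Perm (Fin p)) * c * (g : Equiv.Perm (Fin p))⁻¹ ∈ (Q : Set (Equiv.Perm (Fin p))) \ {1} := by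
    intro g
    constructor
    · exact (Subgroup.mem_normalizer_iff.mp g.2 c).mp (Subgroup.mem_zpowers c)
    · simp only [Set.mem_singleton_iff]
      intro h
      exact hc.ne_one (by
        have := congrArg (fun x => (g : Equiv.Perm (Fin p))⁻¹ * x * (g : Equiv.Perm (Fin p))) h
        simpa [mul_assoc] using this)
  let f : N → ((Q : Set (Equiv.Perm (Fin p))) \ {1} : Set (Equiv.Perm (Fin p))) := fun g => ⟨(g : Equiv.Perm (Fin p)) * c * (g : Equiv.Perm (Fin p))⁻¹, hfmem g⟩
  have hwd : ∀ x y : N, (QuotientGroup.leftRel (Q.subgroupOf N)) x y → f x = f y := by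
    intro x y hxy
    rw [QuotientGroup.leftRel_apply] at hxy
    rw [Subgroup.mem_subgroupOf] at hxy
    rw [← hcent, Subgroup.mem_centralizer_singleton_iff] at hxy
    push_cast at hxy
    apply Subtype.ext
    show (x : Equiv.Perm (Fin p)) * c * (x : Equiv.Perm (Fin p))⁻¹ = (y : Equiv.Perm (Fin p)) * c * (y : Equiv.Perm (Fin p))⁻¹
    have : (y : Equiv.Perm (Fin p)) * c * (y : Equiv.Perm (Fin p))⁻¹ =
        (x : Equiv.Perm (Fin p)) * ((x : Equiv.Perm (Fin p))⁻¹ * (y : Equiv.Perm (Fin p)) * c) * (y : Equiv.Perm (Fin p))⁻¹ := by group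
    rw [this, hxy]
    group
  let fbar : N ⧸ (Q.subgroupOf N) → ((Q : Set (Equiv.Perm (Fin p))) \ {1} : Set (Equiv.Perm (Fin p))) :=
    Quotient.lift f hwd
  have hinj : Function.Injective fbar := by
    intro a b
    induction a using QuotientGroup.induction_on
    induction b using QuotientGroup.induction_on
    rename_i x y
    intro hxy
    have hxy' : (x : Equiv.Perm (Fin p)) * c * (x : Equiv.Perm (Fin p))⁻¹ = (y : Equiv.Perm (Fin p)) * c * (y : Equiv.Perm (Fin p))⁻¹ :=
      congrArg Subtype.val hxy
    apply (QuotientGroup.eq (s := Q.subgroupOf N)).mpr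
    rw [Subgroup.mem_subgroupOf, ← hcent, Subgroup.mem_centralizer_singleton_iff]
    push_cast
    have : (x : Equiv.Perm (Fin p))⁻¹ * ((x : Equiv.Perm (Fin p)) * c * (x : Equiv.Perm (Fin p))⁻¹) * (y : Equiv.Perm (Fin p)) =
        (x : Equiv.Perm (Fin p))⁻¹ * ((y : Equiv.Perm (Fin p)) * c * (y : Equiv.Perm (Fin p))⁻¹) * (y : Equiv.Perm (Fin p)) := by rw [hxy']
    calc (x : Equiv.Perm (Fin p))⁻¹ * (y : Equiv.Perm (Fin p)) * c = (x : Equiv.Perm (Fin p))⁻¹ * ((y : Equiv.Perm (Fin p)) * c * (y : Equiv.Perm (Fin p))⁻¹) * (y : Equiv.Perm (Fin p)) := by group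
    _ = (x : Equiv.Perm (Fin p))⁻¹ * ((x : Equiv.Perm (Fin p)) * c * (x : Equiv.Perm (Fin p))⁻¹) * (y : Equiv.Perm (Fin p)) := by rw [hxy']
    _ = c * ((x : Equiv.Perm (Fin p))⁻¹ * (y : Equiv.Perm (Fin p))) := by group
  have hsurj : Function.Surjective fbar := by
    rintro ⟨σ, hσQ, hσ1⟩
    simp only [Set.mem_singleton_iff] at hσ1
    -- σ has order p
    have hcp : c ^ p = 1 := by rw [← pow_orderOf_eq_one c, horder]
    have hσp : σ ^ p = 1 := by
      obtain ⟨k, rfl⟩ := Subgroup.mem_zpowers_iff.mp hσQ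
      rw [← zpow_natCast, ← zpow_mul, mul_comm, zpow_mul, zpow_natCast, hcp, one_zpow]
    have hσorder : orderOf σ = p := by
      rcases (Nat.Prime.eq_one_or_self_of_dvd hp _ (orderOf_dvd_of_pow_eq_one hσp)) with h | h
      · exact absurd (orderOf_eq_one_iff.mp h) hσ1
      · exact h
    have hσcycle : σ.IsCycle := by
      apply Equiv.Perm.isCycle_of_prime_order' (by rw [hσorder]; exact hp)
      rw [hσorder, Fintype.card_fin]
      omega
    have hconj : IsConj c σ := by
      apply hc.isConj hσcycle
      rw [hc.orderOf.symm.trans horder, hσcycle.orderOf.symm.trans hσorder]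
    obtain ⟨g, hg⟩ := isConj_iff.mp hconj
    have hzp : Subgroup.zpowers σ = Q := by
      apply Subgroup.eq_of_le_of_card_ge (Subgroup.zpowers_le.mpr hσQ)
      rw [Nat.card_zpowers σ, hσorder, hcard]
    have hmap : Q.map (MulAut.conj g).toMonoidHom = Q := by
      rw [hQ, MonoidHom.map_zpowers]
      simpa [MulAut.conj, hg] using hzp
    have hgN : g ∈ N := by
      rw [hN, Subgroup.mem_normalizer_iff]
      intro h
      constructor
      · intro hh
        have : (MulAut.conj g).toMonoidHom h ∈ Q.map (MulAut.conj g).toMonoidHom :=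
          Subgroup.mem_map_of_mem _ hh
        rw [hmap] at this
        simpa [MulAut.conj] using this
      · intro hh
        rw [← hmap] at hh
        obtain ⟨h', hh', heq⟩ := Subgroup.mem_map.mp hh
        have : h' = h := by
          have : g * h' * g⁻¹ = g * h * g⁻¹ := by simpa [MulAut.conj] using heq
          exact mul_left_cancel (mul_right_cancel this)
        rwa [← this]
    refine ⟨QuotientGroup.mk (⟨g, hgN⟩ : N), ?_⟩
    apply Subtype.ext
    show g * c * g⁻¹ = σ
    exact hg
  have hquot : Nat.card (N ⧸ Q.subgroupOf N) = p - 1 := by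
    rw [Nat.card_congr (Equiv.ofBijective fbar ⟨hinj, hsurj⟩)]
    rw [Nat.card_coe_set_eq, Set.ncard_diff_singleton_of_mem (Q.one_mem)]
    have : (Q : Set (Equiv.Perm (Fin p))).ncard = p := by
      rw [← Nat.card_coe_set_eq]
      exact hcard
    rw [this]
  have := Subgroup.card_eq_card_quotient_mul_card_subgroup (Q.subgroupOf N)
  rw [hquot, Nat.card_congr (Subgroup.subgroupOfEquivOfLe hQle).toEquiv, hcard] at this
  rw [this, mul_comm]


theorem aux_doset_norm {G : Type*} [Group G] (Q : Subgroup G) {x : G}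
    (hx : x ∈ Subgroup.normalizer (Q : Set G)) :
    Nat.card (DoubleCoset.doubleCoset x (Q : Set G) (Q : Set G)) = Nat.card Q := by
  have hswap : ({x} : Set G) * (Q : Set G) = (Q : Set G) * {x} := by
    ext y
    simp only [Set.singleton_mul, Set.mul_singleton, Set.mem_image]
    constructor
    · rintro ⟨q, hq, rfl⟩
      exact ⟨x * q * x⁻¹, (Subgroup.mem_normalizer_iff.mp hx q).mp hq, by group⟩
    · rintro ⟨q, hq, rfl⟩
      refine ⟨x⁻¹ * q * x, ?_, by group⟩
      have := (Subgroup.mem_normalizer_iff.mp ((Subgroup.normalizer (Q : Set G)).inv_mem hx) q).mp hq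
      simpa using this
  have hd : DoubleCoset.doubleCoset x (Q : Set G) (Q : Set G) = (Q : Set G) * {x} := by
    rw [DoubleCoset.doubleCoset, mul_assoc, hswap, ← mul_assoc, coe_mul_coe]
  rw [hd, Set.mul_singleton, Nat.card_image_of_injective (mul_left_injective x)]
  rfl

theorem aux_doset_not_norm {p : ℕ} (hp : p.Prime) {G : Type*} [Group G] [Finite G]
    (Q : Subgroup G) (hQ : Nat.card Q = p) {x : G}
    (hx : x ∉ Subgroup.normalizer (Q : Set G)) :
    Nat.card (DoubleCoset.doubleCoset x (Q : Set G) (Q : Set G)) = p ^ 2 := by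
  set R := Q.map (MulAut.conj x).toMonoidHom with hR
  have hcardR : Nat.card R = p := by
    rw [← Nat.card_congr (Subgroup.equivMapOfInjective Q _ (MulAut.conj x).injective).toEquiv]
    exact hQ
  have htriv : ∀ g, g ∈ Q → g ∈ R → g = 1 := by
    intro g hgQ hgR
    by_contra hg1
    have hKQ : Q ⊓ R ≤ Q := inf_le_left
    have hcardK : Nat.card (Q ⊓ R : Subgroup G) ∣ p := hQ ▸ Subgroup.card_dvd_of_le hKQ
    rcases (Nat.Prime.eq_one_or_self_of_dvd hp _ hcardK) with h | h
    · have : (Q ⊓ R : Subgroup G) = ⊥ := Subgroup.card_eq_one.mp h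
      have : g ∈ (⊥ : Subgroup G) := this ▸ Subgroup.mem_inf.mpr ⟨hgQ, hgR⟩
      exact hg1 (Subgroup.mem_bot.mp this)
    · have hQR : Q ⊓ R = Q := by
        apply Subgroup.eq_of_le_of_card_ge hKQ
        rw [h, hQ]
      have hQleR : Q ≤ R := hQR ▸ inf_le_right
      have hQeqR : Q = R := Subgroup.eq_of_le_of_card_ge hQleR (by rw [hcardR, hQ])
      apply hx
      rw [Subgroup.mem_normalizer_iff]
      intro h
      constructor
      · intro hh
        rw [hQeqR]
        exact ⟨h, hh, rfl⟩
      · intro hh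
        rw [hQeqR] at hh
        obtain ⟨h', hh', heq⟩ := Subgroup.mem_map.mp hh
        have : h' = h := by
          have : x * h' * x⁻¹ = x * h * x⁻¹ := by simpa [MulAut.conj] using heq
          exact mul_left_cancel (mul_right_cancel this)
        rwa [← this]
  let f : Q × Q → (DoubleCoset.doubleCoset x (Q : Set G) (Q : Set G)) := fun ab =>
    ⟨(ab.1 : G) * x * (ab.2 : G), DoubleCoset.mem_doubleCoset.mpr ⟨ab.1, ab.1.2, ab.2, ab.2.2, rfl⟩⟩
  have hinj : Function.Injective f := by
    rintro ⟨a, b⟩ ⟨a', b'⟩ hab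
    have heq : (a : G) * x * (b : G) = (a' : G) * x * (b' : G) := congrArg Subtype.val hab
    have key : (a' : G)⁻¹ * (a : G) * x = x * ((b' : G) * (b : G)⁻¹) := by
      calc (a' : G)⁻¹ * (a : G) * x
          = (a' : G)⁻¹ * ((a : G) * x * (b : G)) * (b : G)⁻¹ := by group
        _ = (a' : G)⁻¹ * ((a' : G) * x * (b' : G)) * (b : G)⁻¹ := by rw [heq]
        _ = x * ((b' : G) * (b : G)⁻¹) := by group
    have hmem : (a' : G)⁻¹ * (a : G) = x * ((b' : G) * (b : G)⁻¹) * x⁻¹ := by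
      calc (a' : G)⁻¹ * (a : G) = ((a' : G)⁻¹ * (a : G) * x) * x⁻¹ := by group
        _ = x * ((b' : G) * (b : G)⁻¹) * x⁻¹ := by rw [key]
    have h1 : ((a' : G)⁻¹ * a) = 1 := by
      apply htriv _ (Q.mul_mem (Q.inv_mem a'.2) a.2)
      rw [hmem]
      exact ⟨(b' : G) * (b : G)⁻¹, Q.mul_mem b'.2 (Q.inv_mem b.2), rfl⟩
    have ha : (a : G) = a' := (inv_mul_eq_one.mp h1).symm
    have hb : (b : G) = b' := by
      rw [ha] at heq
      exact mul_left_cancel heq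
    exact Prod.ext (Subtype.ext ha) (Subtype.ext hb)
  have hsurj : Function.Surjective f := by
    rintro ⟨y, hy⟩
    obtain ⟨a, ha, b, hb, rfl⟩ := DoubleCoset.mem_doubleCoset.mp hy
    exact ⟨(⟨⟨a, ha⟩, ⟨b, hb⟩⟩ : Q × Q), rfl⟩
  rw [← Nat.card_congr (Equiv.ofBijective f ⟨hinj, hsurj⟩), Nat.card_prod, hQ, sq]


theorem aux_partition {α : Type*} [Finite α] (S : Set (Set α)) (c : ℕ)
    (hc : ∀ T ∈ S, Nat.card T = c)
    (hdisj : ∀ T ∈ S, ∀ U ∈ S, T ≠ U → Disjoint T U) :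
    Nat.card (⋃₀ S) = Nat.card S * c := by
  have hpw : Pairwise (Function.onFun Disjoint (fun T : S => (T : Set α))) := by
    intro i j hij
    exact hdisj i i.2 j j.2 (fun h => hij (Subtype.ext h))
  have h1 : ⋃₀ S = ⋃ (T : S), (T : Set α) := Set.sUnion_eq_iUnion
  rw [h1, Nat.card_congr (Set.unionEqSigmaOfDisjoint hpw)]
  have e2 : (Σ T : S, (T : Set α)) ≃ S × Fin c := by
    refine (Equiv.sigmaCongrRight (fun T => ?_)).trans (Equiv.sigmaEquivProd S (Fin c))
    exact Finite.equivFinOfCardEq (hc T T.2)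
  rw [Nat.card_congr e2, Nat.card_prod]
  simp


/-- For a Sylow `p`-subgroup `P` of `S_p`, the number of `(P,P)`-double cosets of size `p`
is `p - 1`, and the number of those of size `p²` is `((p-1)! - (p-1))/p`. -/
theorem sylow_dosets_of_symm_p {p : ℕ} (hp : p.Prime)
    (P : Sylow p (Equiv.Perm (Fin p))) :
    Nat.card {S : Set (Equiv.Perm (Fin p)) |
        (∃ x, S = DoubleCoset.doubleCoset x ((P : Subgroup (Equiv.Perm (Fin p))) : Set (Equiv.Perm (Fin p)))
          ((P : Subgroup (Equiv.Perm (Fin p))) : Set (Equiv.Perm (Fin p)))) ∧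
        Nat.card S = p} = p - 1 ∧
    Nat.card {S : Set (Equiv.Perm (Fin p)) |
        (∃ x, S = DoubleCoset.doubleCoset x ((P : Subgroup (Equiv.Perm (Fin p))) : Set (Equiv.Perm (Fin p)))
          ((P : Subgroup (Equiv.Perm (Fin p))) : Set (Equiv.Perm (Fin p)))) ∧
        Nat.card S = p ^ 2} = ((p - 1).factorial - (p - 1)) / p := by
  classical
  have hfact : Fact p.Prime := ⟨hp⟩
  have hp1 := hp.one_lt
  set Q : Subgroup (Equiv.Perm (Fin p)) := (P : Subgroup (Equiv.Perm (Fin p))) with hQdef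
  have hcardQ : Nat.card Q = p := aux_card_sylow hp P
  -- find a generating p-cycle
  have : Fintype ↥Q := Fintype.ofFinite _
  obtain ⟨c', hc'⟩ := exists_prime_orderOf_dvd_card (G := ↥Q) p
    (by rw [← Nat.card_eq_fintype_card, hcardQ])
  set c : Equiv.Perm (Fin p) := (c' : Equiv.Perm (Fin p)) with hcdef
  have horder : orderOf c = p := by rw [hcdef, Subgroup.orderOf_coe, hc']
  have hzp : Subgroup.zpowers c = Q := by
    apply Subgroup.eq_of_le_of_card_ge (Subgroup.zpowers_le.mpr c'.2)
    rw [Nat.card_zpowers, horder, hcardQ]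
  have hccycle : c.IsCycle := by
    apply Equiv.Perm.isCycle_of_prime_order' (by rw [horder]; exact hp)
    rw [horder, Fintype.card_fin]; omega
  have hsupp : c.support = Finset.univ := by
    apply Finset.eq_univ_of_card
    rw [← hccycle.orderOf, horder, Fintype.card_fin]
  have hNcard : Nat.card (Subgroup.normalizer (Q : Set (Equiv.Perm (Fin p)))) = p * (p - 1) := by
    rw [← hzp]
    exact aux_norm hp c hccycle hsupp (by rw [hzp]; exact hcardQ)
  set N : Subgroup (Equiv.Perm (Fin p)) := Subgroup.normalizer (Q : Set (Equiv.Perm (Fin p))) with hNdef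
  -- doset cardinalities
  have hdsize : ∀ x : Equiv.Perm (Fin p),
      Nat.card (DoubleCoset.doubleCoset x (Q : Set (Equiv.Perm (Fin p))) (Q : Set (Equiv.Perm (Fin p)))) =
        if x ∈ N then p else p ^ 2 := by
    intro x
    by_cases hx : x ∈ N
    · rw [if_pos hx, aux_doset_norm Q hx, hcardQ]
    · rw [if_neg hx, aux_doset_not_norm hp Q hcardQ hx]
  set S1 : Set (Set (Equiv.Perm (Fin p))) := {S | (∃ x, S = DoubleCoset.doubleCoset x
      (Q : Set (Equiv.Perm (Fin p))) (Q : Set (Equiv.Perm (Fin p)))) ∧ Nat.card S = p} with hS1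
  set S2 : Set (Set (Equiv.Perm (Fin p))) := {S | (∃ x, S = DoubleCoset.doubleCoset x
      (Q : Set (Equiv.Perm (Fin p))) (Q : Set (Equiv.Perm (Fin p)))) ∧ Nat.card S = p ^ 2}
    with hS2
  have hp2ne : p ^ 2 ≠ p := by nlinarith
  have hdisj : ∀ (X : Set (Set (Equiv.Perm (Fin p)))), (∀ S ∈ X, ∃ x, S = DoubleCoset.doubleCoset x
      (Q : Set (Equiv.Perm (Fin p))) (Q : Set (Equiv.Perm (Fin p)))) →
      ∀ T ∈ X, ∀ U ∈ X, T ≠ U → Disjoint T U := by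
    intro X hX T hT U hU hTU
    obtain ⟨x, rfl⟩ := hX T hT
    obtain ⟨y, rfl⟩ := hX U hU
    by_contra hnd
    exact hTU (DoubleCoset.eq_of_not_disjoint hnd)
  -- unions
  have hU1 : ⋃₀ S1 = (N : Set (Equiv.Perm (Fin p))) := by
    apply le_antisymm
    · rintro y ⟨S, ⟨⟨x, rfl⟩, hcard⟩, hyS⟩
      have heq := DoubleCoset.doubleCoset_eq_of_mem (H := Q) (K := Q) hyS
      by_contra hyN
      rw [← heq] at hcard
      rw [hdsize y, if_neg (show ¬ y ∈ N from hyN)] at hcard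
      exact hp2ne hcard
    · intro y hy
      exact ⟨DoubleCoset.doubleCoset y (Q : Set (Equiv.Perm (Fin p))) (Q : Set (Equiv.Perm (Fin p))),
        ⟨⟨y, rfl⟩, by rw [hdsize y, if_pos (show y ∈ N from hy)]⟩, DoubleCoset.mem_doubleCoset_self Q Q y⟩
  have hU2 : ⋃₀ S2 = (N : Set (Equiv.Perm (Fin p)))ᶜ := by
    apply le_antisymm
    · rintro y ⟨S, ⟨⟨x, rfl⟩, hcard⟩, hyS⟩
      have heq := DoubleCoset.doubleCoset_eq_of_mem (H := Q) (K := Q) hyS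
      intro hyN
      rw [← heq] at hcard
      rw [hdsize y, if_pos (show y ∈ N from hyN)] at hcard
      exact hp2ne hcard.symm
    · intro y hy
      exact ⟨DoubleCoset.doubleCoset y (Q : Set (Equiv.Perm (Fin p))) (Q : Set (Equiv.Perm (Fin p))),
        ⟨⟨y, rfl⟩, by rw [hdsize y, if_neg (show ¬ y ∈ N from hy)]⟩, DoubleCoset.mem_doubleCoset_self Q Q y⟩
  -- count S1
  have hcount1 : Nat.card S1 * p = p * (p - 1) := by
    rw [← aux_partition S1 p (fun T hT => hT.2) (hdisj S1 (fun S hS => hS.1)), hU1]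
    rw [← hNcard]
    rfl
  have hc1 : Nat.card S1 = p - 1 := by
    have hppos : 0 < p := hp.pos
    rw [mul_comm p (p-1)] at hcount1
    exact Nat.eq_of_mul_eq_mul_right hppos hcount1
  -- count S2
  have hcountG : Nat.card (Equiv.Perm (Fin p)) = p * (p - 1).factorial := by
    have : Nat.card (Equiv.Perm (Fin p)) = p.factorial := by
      simp [Nat.card_eq_fintype_card, Fintype.card_perm, Fintype.card_fin]
    rw [this]
    obtain ⟨q, rfl⟩ : ∃ q, p = q + 1 := ⟨p - 1, by omega⟩
    simp [Nat.factorial_succ]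
  have hcount2 : Nat.card S2 * p ^ 2 + p * (p - 1) = p * (p - 1).factorial := by
    have hpart : Nat.card (⋃₀ S2) = Nat.card S2 * p ^ 2 :=
      aux_partition S2 (p ^ 2) (fun T hT => hT.2) (hdisj S2 (fun S hS => hS.1))
    rw [hU2] at hpart
    have hcompl := Set.ncard_add_ncard_compl (N : Set (Equiv.Perm (Fin p)))
    rw [← Nat.card_coe_set_eq, ← Nat.card_coe_set_eq] at hcompl
    have hNcard' : Nat.card ((N : Set (Equiv.Perm (Fin p)))) = p * (p - 1) := by
      rw [← hNcard]; rfl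
    have huniv : (Set.univ : Set (Equiv.Perm (Fin p))).ncard = p * (p - 1).factorial := by
      rw [← Nat.card_coe_set_eq, Nat.card_congr (Equiv.Set.univ _), hcountG]
    omega
  have hfge : p - 1 ≤ (p - 1).factorial := Nat.self_le_factorial _
  have hc2 : Nat.card S2 = ((p - 1).factorial - (p - 1)) / p := by
    have h3 : p * (Nat.card S2 * p + (p - 1)) = p * (p - 1).factorial := by
      rw [← hcount2]; ring
    have h4 := Nat.eq_of_mul_eq_mul_left hp.pos h3
    have hkey : Nat.card S2 * p = (p - 1).factorial - (p - 1) := by omega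
    symm
    apply Nat.div_eq_of_eq_mul_left hp.pos
    rw [← hkey, mul_comm]
  exact ⟨hc1, hc2⟩
end

section
/- Let G be a finite group, p a prime, and P a Sylow p-subgroup of G. For k ≥ 0 with p^k ≤ |P|, let d(p^k) be the number of Sylow p-subgroups Q of G with |P : P ∩ Q| = p^k. Then the number of (P,P)-double cosets of G of size |P|·p^k equals (d(p^k)/p^k) · |N_G(P) : P|. -/
/-- Fiber-counting: if all fibers of `f` have card `n`, then `|α| = |range f| * n`. -/
lemma aux_card_range_mul {α β : Type*} [Finite α] (f : α → β) (n : ℕ)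
    (h : ∀ a : α, Nat.card (f ⁻¹' {f a}) = n) :
    Nat.card α = Nat.card (Set.range f) * n := by
  classical
  have hfin : Finite (Set.range f) := Set.finite_range f
  have e : (Σ b : Set.range f, (Set.rangeFactorization f) ⁻¹' {b}) ≃ α :=
    Equiv.sigmaFiberEquiv _
  have hfib : ∀ b : Set.range f,
      Nat.card ((Set.rangeFactorization f) ⁻¹' {b}) = n := by
    rintro ⟨b, a, rfl⟩
    rw [← h a]
    apply Nat.card_congr
    apply Equiv.subtypeEquivProp
    ext y
    simp [Set.rangeFactorization, Subtype.ext_iff]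
  cases nonempty_fintype α
  have := Fintype.ofFinite (Set.range f)
  have : ∀ b : Set.range f, Finite ((Set.rangeFactorization f) ⁻¹' {b}) := fun b =>
    Subtype.finite
  have := fun b : Set.range f => Fintype.ofFinite ((Set.rangeFactorization f) ⁻¹' {b})
  rw [← Nat.card_congr e]
  rw [Nat.card_eq_fintype_card, Fintype.card_sigma]
  rw [Nat.card_eq_fintype_card]
  have : ∀ b : Set.range f, Fintype.card ((Set.rangeFactorization f) ⁻¹' {b}) = n := by
    intro b; rw [← Nat.card_eq_fintype_card]; exact hfib b
  simp [this, Finset.sum_const, mul_comm]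

lemma card_inf_mul_relindex {G : Type*} [Group G] [Fintype G] (Q P : Subgroup G) :
    Q.relIndex P * Nat.card ↥(Q ⊓ P) = Nat.card ↥P := by
  have h1 : Nat.card ↥(Q ⊓ P) = Nat.card ((Q ⊓ P).subgroupOf P) :=
    Nat.card_congr (Subgroup.subgroupOfEquivOfLe inf_le_right).toEquiv.symm
  have h2 := Subgroup.card_mul_index ((Q ⊓ P).subgroupOf P)
  rw [h1, ← h2, mul_comm]
  congr 1
  rw [Subgroup.inf_subgroupOf_right]
  rfl

lemma card_doset_eq {G : Type*} [Group G] [Fintype G] {p : ℕ} [Fact p.Prime]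
    (P : Sylow p G) (x : G) :
    Nat.card (DoubleCoset.doubleCoset x ((P : Subgroup G) : Set G) ((P : Subgroup G) : Set G)) =
      Nat.card P * ((x • P : Sylow p G) : Subgroup G).relIndex (P : Subgroup G) := by
  classical
  set Q : Subgroup G := ((x • P : Sylow p G) : Subgroup G) with hQ
  have hmemQ : ∀ d : G, d ∈ Q ↔ x⁻¹ * d * x ∈ (P : Subgroup G) := by
    intro d
    rw [hQ, Sylow.coe_subgroup_smul, Subgroup.mem_pointwise_smul_iff_inv_smul_mem]
    simp [MulAut.smul_def]
  set φ : ↥(P : Subgroup G) × ↥(P : Subgroup G) → G :=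
    fun ab => (ab.1 : G) * x * (ab.2 : G) with hφ
  have hrange : Set.range φ
      = DoubleCoset.doubleCoset x ((P : Subgroup G) : Set G) ((P : Subgroup G) : Set G) := by
    ext y
    rw [DoubleCoset.mem_doubleCoset]
    constructor
    · rintro ⟨⟨a, b⟩, rfl⟩
      exact ⟨a, a.2, b, b.2, rfl⟩
    · rintro ⟨a, ha, b, hb, rfl⟩
      exact ⟨⟨⟨a, ha⟩, ⟨b, hb⟩⟩, rfl⟩
  have hfib : ∀ ab, Nat.card (φ ⁻¹' {φ ab}) = Nat.card ↥(Q ⊓ (P : Subgroup G)) := by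
    rintro ⟨a₀, b₀⟩
    symm
    have hto : ∀ d : ↥(Q ⊓ (P : Subgroup G)),
        (⟨(a₀ : G) * (d : G), mul_mem a₀.2 d.2.2⟩,
         (⟨x⁻¹ * (d : G)⁻¹ * x * (b₀ : G),
            mul_mem (by simpa [mul_assoc] using inv_mem ((hmemQ (d : G)).mp d.2.1)) b₀.2⟩ :
              ↥(P : Subgroup G))) ∈ φ ⁻¹' {φ (a₀, b₀)} := by
      intro d
      show (a₀ : G) * (d : G) * x * (x⁻¹ * (d : G)⁻¹ * x * (b₀ : G)) = (a₀ : G) * x * (b₀ : G)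
      group
    apply Nat.card_eq_of_bijective (fun d => ⟨_, hto d⟩)
    constructor
    · intro d d' h
      have h1 : (a₀ : G) * (d : G) = (a₀ : G) * (d' : G) :=
        congrArg (fun z => ((z : ↥(φ ⁻¹' {φ (a₀, b₀)})).1.1 : G)) h
      exact Subtype.ext (mul_left_cancel h1)
    · rintro ⟨⟨⟨a, ha⟩, ⟨b, hb⟩⟩, hab⟩
      have heq : a * x * b = (a₀ : G) * x * (b₀ : G) := hab
      have hd2 : (a₀ : G)⁻¹ * a ∈ Q ⊓ (P : Subgroup G) := by
        rw [Subgroup.mem_inf]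
        constructor
        · rw [hmemQ]
          have key : x⁻¹ * ((a₀ : G)⁻¹ * a) * x = (b₀ : G) * b⁻¹ := by
            rw [show a = (a₀ : G) * x * (b₀ : G) * b⁻¹ * x⁻¹ by rw [← heq]; group]
            group
          rw [key]
          exact mul_mem b₀.2 (inv_mem hb)
        · exact mul_mem (inv_mem a₀.2) ha
      refine ⟨⟨(a₀ : G)⁻¹ * a, hd2⟩, ?_⟩
      apply Subtype.ext
      apply Prod.ext <;> apply Subtype.ext
      · show (a₀ : G) * ((a₀ : G)⁻¹ * a) = a
        group
      · show x⁻¹ * ((a₀ : G)⁻¹ * a)⁻¹ * x * (b₀ : G) = b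
        rw [show a = (a₀ : G) * x * (b₀ : G) * b⁻¹ * x⁻¹ by rw [← heq]; group]
        group
  have hcount := aux_card_range_mul φ (Nat.card ↥(Q ⊓ (P : Subgroup G))) hfib
  rw [hrange, Nat.card_prod] at hcount
  have hrel := card_inf_mul_relindex Q (P : Subgroup G)
  have hpos : 0 < Nat.card ↥(Q ⊓ (P : Subgroup G)) := Nat.card_pos
  refine Nat.eq_of_mul_eq_mul_right hpos ?_
  rw [mul_assoc, hrel, ← hcount]


/-- Let `P` be a Sylow `p`-subgroup of a finite group `G` and `p^k ≤ |P|`. If `d(p^k)` denotes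
the number of Sylow `p`-subgroups `Q` with `|P : P ∩ Q| = p^k`, then the number of
`(P,P)`-double cosets of size `|P|·p^k` is `(d(p^k)/p^k) · |N_G(P) : P|`. -/
theorem card_dosets_of_size {G : Type*} [Group G] [Fintype G] {p : ℕ} [Fact p.Prime]
    (P : Sylow p G) (k : ℕ) (hk : p ^ k ≤ Nat.card P) :
    Nat.card {S : Set G |
        (∃ x : G, S = DoubleCoset.doubleCoset x ((P : Subgroup G) : Set G) ((P : Subgroup G) : Set G)) ∧
        Nat.card S = Nat.card P * p ^ k} =
      Nat.card {Q : Sylow p G | (Q : Subgroup G).relIndex (P : Subgroup G) = p ^ k} / p ^ k *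
        (P : Subgroup G).relIndex (Subgroup.normalizer ((P : Subgroup G) : Set G)) := by
  classical
  set N : Subgroup G := Subgroup.normalizer ((P : Subgroup G) : Set G) with hN
  set r : ℕ := (P : Subgroup G).relIndex N with hr
  set X : Set G := {x : G |
    Nat.card (DoubleCoset.doubleCoset x ((P : Subgroup G) : Set G) ((P : Subgroup G) : Set G)) =
      Nat.card P * p ^ k} with hX
  have hcardP : 0 < Nat.card P := Nat.card_pos
  -- membership in X in terms of relindex
  have hXiff : ∀ x : G, x ∈ X ↔
      ((x • P : Sylow p G) : Subgroup G).relIndex (P : Subgroup G) = p ^ k := by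
    intro x
    rw [hX, Set.mem_setOf_eq, card_doset_eq P x]
    exact ⟨fun h => Nat.eq_of_mul_eq_mul_left hcardP h, fun h => by rw [h]⟩
  -- Count 1: fibers of the doset map
  set f₁ : X → Set G := fun x =>
    DoubleCoset.doubleCoset (x : G) ((P : Subgroup G) : Set G) ((P : Subgroup G) : Set G) with hf₁
  have hfib₁ : ∀ x : X, Nat.card (f₁ ⁻¹' {f₁ x}) = Nat.card P * p ^ k := by
    intro x
    have hx2 : Nat.card
        (DoubleCoset.doubleCoset (x : G) ((P : Subgroup G) : Set G) ((P : Subgroup G) : Set G)) =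
        Nat.card P * p ^ k := x.2
    rw [← hx2]
    apply Nat.card_congr
    have hto : ∀ y : f₁ ⁻¹' {f₁ x}, ((y : X) : G) ∈
        DoubleCoset.doubleCoset (x : G) ((P : Subgroup G) : Set G) ((P : Subgroup G) : Set G) := by
      rintro ⟨y, hy⟩
      have h' : DoubleCoset.doubleCoset ((y : G)) ((P : Subgroup G) : Set G) ((P : Subgroup G) : Set G) =
          DoubleCoset.doubleCoset ((x : G)) ((P : Subgroup G) : Set G) ((P : Subgroup G) : Set G) := hy
      rw [← h']
      exact DoubleCoset.mem_doubleCoset_self _ _ _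
    refine Equiv.ofBijective (fun y => ⟨_, hto y⟩) ⟨?_, ?_⟩
    · intro y y' h
      have h' := Subtype.ext_iff.mp h
      simp only at h'
      exact Subtype.ext (Subtype.ext h')
    · rintro ⟨g, hg⟩
      have h1 : DoubleCoset.doubleCoset g ((P : Subgroup G) : Set G) ((P : Subgroup G) : Set G) =
          DoubleCoset.doubleCoset (x : G) ((P : Subgroup G) : Set G) ((P : Subgroup G) : Set G) :=
        DoubleCoset.doubleCoset_eq_of_mem hg
      have hgX : g ∈ X := by rw [hX, Set.mem_setOf_eq, h1]; exact x.2
      exact ⟨⟨⟨g, hgX⟩, Set.mem_preimage.mpr (Set.mem_singleton_iff.mpr h1)⟩, rfl⟩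
  have hcount₁ := aux_card_range_mul f₁ (Nat.card P * p ^ k) hfib₁
  have hrange₁ : Set.range f₁ = {S : Set G |
      (∃ x : G, S = DoubleCoset.doubleCoset x ((P : Subgroup G) : Set G) ((P : Subgroup G) : Set G)) ∧
      Nat.card S = Nat.card P * p ^ k} := by
    ext S
    constructor
    · rintro ⟨x, rfl⟩
      exact ⟨⟨(x : G), rfl⟩, x.2⟩
    · rintro ⟨⟨x, rfl⟩, hcard⟩
      exact ⟨⟨x, hcard⟩, rfl⟩
  rw [hrange₁] at hcount₁
  -- Count 2: fibers of the conjugation map to Sylow subgroups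
  set f₂ : X → Sylow p G := fun x => (x : G) • P with hf₂
  have hfib₂ : ∀ x : X, Nat.card (f₂ ⁻¹' {f₂ x}) = Nat.card N := by
    intro x
    symm
    have hto : ∀ n : N, ((x : G) * (n : G)) ∈ X := by
      intro n
      rw [hXiff, mul_smul, Sylow.smul_eq_iff_mem_normalizer.mpr n.2]
      exact (hXiff (x : G)).mp x.2
    have hto2 : ∀ n : N, (⟨(x : G) * (n : G), hto n⟩ : X) ∈ f₂ ⁻¹' {f₂ x} := by
      intro n
      show ((x : G) * (n : G)) • P = (x : G) • P
      rw [mul_smul, Sylow.smul_eq_iff_mem_normalizer.mpr n.2]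
    apply Nat.card_eq_of_bijective (fun n => ⟨_, hto2 n⟩)
    constructor
    · intro n n' h
      have h2 : ((x : G) * (n : G)) = ((x : G) * (n' : G)) :=
        Subtype.ext_iff.mp (Subtype.ext_iff.mp h)
      exact Subtype.ext (mul_left_cancel h2)
    · rintro ⟨⟨y, hyX⟩, hy⟩
      have hy' : y • P = (x : G) • P := hy
      have hn : (x : G)⁻¹ * y ∈ N := by
        exact Sylow.smul_eq_iff_mem_normalizer.mp (by rw [mul_smul, hy', inv_smul_smul])
      refine ⟨⟨_, hn⟩, ?_⟩
      apply Subtype.ext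
      apply Subtype.ext
      show (x : G) * ((x : G)⁻¹ * y) = y
      group
  have hcount₂ := aux_card_range_mul f₂ (Nat.card N) hfib₂
  have hrange₂ : Set.range f₂ =
      {Q : Sylow p G | (Q : Subgroup G).relIndex (P : Subgroup G) = p ^ k} := by
    ext Q
    constructor
    · rintro ⟨x, rfl⟩
      exact (hXiff (x : G)).mp x.2
    · intro hQ
      obtain ⟨g, hg⟩ := MulAction.exists_smul_eq G P Q
      have hgX : g ∈ X := by rw [hXiff, hg]; exact hQ
      exact ⟨⟨g, hgX⟩, hg⟩
  rw [hrange₂] at hcount₂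
  -- |N| = r * |P|
  have hNcard : Nat.card N = r * Nat.card P := by
    have := card_inf_mul_relindex (P : Subgroup G) N
    rw [inf_eq_left.mpr Subgroup.le_normalizer] at this
    exact this.symm
  -- p does not divide r
  have hpr : ¬ p ∣ r := by
    intro hdvd
    exact P.not_dvd_index
      (hdvd.trans (Subgroup.relIndex_dvd_index_of_le Subgroup.le_normalizer))
  -- the key equation
  set D := Nat.card {S : Set G |
      (∃ x : G, S = DoubleCoset.doubleCoset x ((P : Subgroup G) : Set G) ((P : Subgroup G) : Set G)) ∧
      Nat.card S = Nat.card P * p ^ k} with hD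
  set d := Nat.card {Q : Sylow p G | (Q : Subgroup G).relIndex (P : Subgroup G) = p ^ k}
    with hd
  have key : D * p ^ k = d * r := by
    have h1 : D * (Nat.card P * p ^ k) = d * (r * Nat.card P) := by
      rw [← hcount₁, ← hNcard, ← hcount₂]
    apply Nat.eq_of_mul_eq_mul_right hcardP
    calc D * p ^ k * Nat.card P = D * (Nat.card P * p ^ k) := by ring
      _ = d * (r * Nat.card P) := h1
      _ = d * r * Nat.card P := by ring
  have hcop : Nat.Coprime (p ^ k) r :=
    Nat.Coprime.pow_left k ((Nat.Prime.coprime_iff_not_dvd Fact.out).mpr hpr)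
  have hdvd : p ^ k ∣ d := by
    refine hcop.dvd_of_dvd_mul_right ?_
    exact ⟨D, by rw [← key]; ring⟩
  obtain ⟨m, hm⟩ := hdvd
  have hppos : 0 < p ^ k := Nat.pow_pos (Fact.out : p.Prime).pos
  rw [hm, Nat.mul_div_cancel_left m hppos]
  apply Nat.eq_of_mul_eq_mul_right hppos
  calc D * p ^ k = d * r := key
    _ = m * r * p ^ k := by rw [hm]; ring
end

section
/- Let p be a prime and 1 ≤ k ≤ p−1, and set n = kp. Let σ₁,…,σ_k ∈ S_n be the disjoint p-cycles σᵢ = ((i−1)p+1, …, ip), and for 0 ≤ i ≤ k let aᵢ be the number of π ∈ S_n such that the set R(π) = {r : ∃ s, πσ_rπ⁻¹ ∈ ⟨σ_s⟩} has size exactly i. Then for each 0 ≤ i ≤ k: Σ_{j=i}^{k} aⱼ · C(j,i) = ((k−i)p)! · i! · C(k,i)² · (p(p−1))ⁱ. -/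
open Equiv Equiv.Perm Finset

namespace DGI

variable {α β γ : Type*}

lemma permCongr_mul (e : α ≃ β) (u v : Equiv.Perm α) :
    e.permCongr (u * v) = e.permCongr u * e.permCongr v := by
  ext x; simp [Equiv.Perm.mul_apply]

/-- `permCongr` as a `MulEquiv`. -/
def permMulCongr (e : α ≃ β) : Equiv.Perm α ≃* Equiv.Perm β :=
  { e.permCongr with map_mul' := permCongr_mul e }

lemma permMulCongr_apply (e : α ≃ β) (u : Equiv.Perm α) :
    permMulCongr e u = e.permCongr u := rfl

lemma permCongr_zpow (e : α ≃ β) (u : Equiv.Perm α) (m : ℤ) :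
    e.permCongr (u ^ m) = (e.permCongr u) ^ m := by
  rw [← permMulCongr_apply, ← permMulCongr_apply, map_zpow]

lemma support_permCongr [Fintype α] [DecidableEq α] [Fintype β] [DecidableEq β]
    (e : α ≃ β) (u : Equiv.Perm α) :
    (e.permCongr u).support = u.support.map e.toEmbedding := by
  ext y
  simp only [Equiv.Perm.mem_support, Finset.mem_map_equiv, Equiv.permCongr_apply]
  rw [ne_eq, Equiv.apply_eq_iff_eq_symm_apply]

lemma isCycle_permCongr [Fintype α] [DecidableEq α] [Fintype β] [DecidableEq β]
    (e : α ≃ β) {u : Equiv.Perm α} (hc : u.IsCycle) : (e.permCongr u).IsCycle := by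
  obtain ⟨x, hx, h⟩ := hc
  refine ⟨e x, by simpa using fun hxx => hx (e.injective hxx), fun y hy => ?_⟩
  have hy' : u (e.symm y) ≠ e.symm y := by
    intro hh
    apply hy
    simp [Equiv.permCongr_apply, hh]
  obtain ⟨m, hm⟩ := h hy'
  exact ⟨m, by rw [← permCongr_zpow]; simp [Equiv.permCongr_apply, hm]⟩

lemma zpowers_eq_of_ne_one {G : Type*} [Group G] [Finite G] {p : ℕ} (hp : p.Prime)
    {d t : G} (ho : orderOf d = p) (ht : t ∈ Subgroup.zpowers d) (h1 : t ≠ 1) :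
    Subgroup.zpowers t = Subgroup.zpowers d := by
  have : Fact p.Prime := ⟨hp⟩
  obtain ⟨m, rfl⟩ := ht
  have hop : orderOf (d ^ m) = p := by
    refine orderOf_eq_prime ?_ h1
    rw [← zpow_natCast, ← zpow_mul, mul_comm, zpow_mul, zpow_natCast, ← ho,
      pow_orderOf_eq_one, one_zpow]
  have hle : Subgroup.zpowers (d ^ m) ≤ Subgroup.zpowers d :=
    Subgroup.zpowers_le.mpr ⟨m, rfl⟩
  have hcard : Nat.card (Subgroup.zpowers (d ^ m)) = Nat.card (Subgroup.zpowers d) := by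
    rw [Nat.card_zpowers, Nat.card_zpowers, hop, ho]
  exact Subgroup.eq_of_le_of_card_ge hle hcard.ge

end DGI



namespace DGI2

variable {α β : Type*} [Fintype α] [DecidableEq α] [Fintype β] [DecidableEq β]

lemma invariant_of_disjoint {u : Equiv.Perm α} {s : Finset α} (h : Disjoint u.support s) :
    ∀ x, x ∈ s ↔ u x ∈ s := by
  intro x
  by_cases hx : x ∈ u.support
  · have hx1 : x ∉ s := Finset.disjoint_left.mp h hx
    have hx2 : u x ∉ s := Finset.disjoint_left.mp h (Equiv.Perm.apply_mem_support.mpr hx)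
    simp [hx1, hx2]
  · rw [Equiv.Perm.notMem_support] at hx; rw [hx]

variable {s : Set α} [Fintype s]

lemma mem_support_subtypePerm {u : Equiv.Perm α} (h : ∀ x, x ∈ s ↔ u x ∈ s) (x : s) :
    x ∈ (u.subtypePerm (fun x => (h x).symm)).support ↔ (↑x ∈ u.support) := by
  simp [Equiv.Perm.mem_support, Subtype.ext_iff]

lemma card_support_subtypePerm {u : Equiv.Perm α} (h : ∀ x, x ∈ s ↔ u x ∈ s)
    (hsub : ∀ x ∈ u.support, x ∈ s) :
    (u.subtypePerm (fun x => (h x).symm)).support.card = u.support.card := by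
  have himg : u.support = (u.subtypePerm (fun x => (h x).symm)).support.image Subtype.val := by
    ext b
    simp only [Finset.mem_image]
    constructor
    · intro hb; exact ⟨⟨b, hsub b hb⟩, (mem_support_subtypePerm h _).mpr hb, rfl⟩
    · rintro ⟨a, ha, rfl⟩; exact (mem_support_subtypePerm h a).mp ha
  rw [himg, Finset.card_image_of_injective _ Subtype.coe_injective]

omit [Fintype ↑s] in
lemma isCycle_subtypePerm {u : Equiv.Perm α} (hc : u.IsCycle)
    (h : ∀ x, x ∈ s ↔ u x ∈ s) (hsub : ∀ x ∈ u.support, x ∈ s) :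
    (u.subtypePerm (fun x => (h x).symm)).IsCycle := by
  obtain ⟨x, hx, hsc⟩ := hc
  refine ⟨⟨x, hsub x (Equiv.Perm.mem_support.mpr hx)⟩, ?_, ?_⟩
  · simp [Subtype.ext_iff, hx]
  · rintro ⟨y, hy⟩ hyy
    have hy' : u y ≠ y := by simpa [Subtype.ext_iff] using hyy
    obtain ⟨m, hm⟩ := hsc hy'
    refine ⟨m, ?_⟩
    rw [Equiv.Perm.subtypePerm_zpow]
    exact Subtype.ext hm

omit [Fintype α] [DecidableEq α] [Fintype β] [DecidableEq β] [Fintype ↑s] in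
/-- Equality of a conjugate with a permutation transfers to restrictions. -/
lemma permCongr_subtypeEquiv_eq {t : Set β}
    (e : α ≃ β) (he : ∀ a, a ∈ s ↔ e a ∈ t)
    {u : Equiv.Perm α} (hu : ∀ x, x ∈ s ↔ u x ∈ s) (hus : ∀ x, x ∉ s → u x = x)
    {v : Equiv.Perm β} (hv : ∀ y, y ∈ t ↔ v y ∈ t) (hvs : ∀ y, y ∉ t → v y = y) :
    e.permCongr u = v ↔
      (e.subtypeEquiv he).permCongr (u.subtypePerm (fun x => (hu x).symm)) = v.subtypePerm (fun x => (hv x).symm) := by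
  constructor
  · intro H
    ext ⟨y, hy⟩
    have := Equiv.ext_iff.mp H y
    simp only [Equiv.permCongr_apply] at this ⊢
    simp only [Equiv.subtypeEquiv_symm, Equiv.subtypeEquiv_apply, Equiv.Perm.subtypePerm_apply,
      Subtype.ext_iff]
    exact this
  · intro H
    ext y
    by_cases hy : y ∈ t
    · have := Equiv.ext_iff.mp H ⟨y, hy⟩
      simp only [Equiv.permCongr_apply, Equiv.subtypeEquiv_symm, Equiv.subtypeEquiv_apply,
        Equiv.Perm.subtypePerm_apply, Subtype.ext_iff] at this
      simpa using this
    · have h1 : e.symm y ∉ s := fun hs' => hy (by simpa using (he _).mp hs')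
      simp only [Equiv.permCongr_apply, hus _ h1, Equiv.apply_symm_apply, hvs _ hy]

end DGI2



namespace DGI3

variable {α β : Type*} [Fintype α] [DecidableEq α] [Fintype β] [DecidableEq β]

-- counting helper
lemma natcard_subtype_fiber_sum {X Y : Type*} [Fintype X] (P : X → Prop) (f : X → Y)
    (Z : Finset Y) (hf : ∀ x, P x → f x ∈ Z) :
    Nat.card {x // P x} = ∑ y ∈ Z, Nat.card {x // P x ∧ f x = y} := by
  classical
  rw [Nat.card_eq_fintype_card, Fintype.card_subtype,
    Finset.card_eq_sum_card_fiberwise (fun x hx => hf x (Finset.mem_filter.mp hx).2)]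
  refine Finset.sum_congr rfl fun y hy => ?_
  rw [Nat.card_eq_fintype_card, Fintype.card_subtype, Finset.filter_filter]

lemma invariant_zpow {v : Equiv.Perm β} {t : Set β} (h : ∀ y, y ∈ t ↔ v y ∈ t) :
    ∀ (m : ℤ) (y : β), y ∈ t ↔ (v ^ m) y ∈ t := by
  have hn : ∀ (n : ℕ) (y : β), y ∈ t ↔ (v ^ n) y ∈ t := by
    intro n
    induction n with
    | zero => simp
    | succ n ih =>
      intro y
      rw [pow_succ', Equiv.Perm.mul_apply]
      exact (ih y).trans (h _)
  intro m y
  cases m with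
  | ofNat n => exact hn n y
  | negSucc n =>
    rw [zpow_negSucc]
    have h2 := hn (n + 1) ((v ^ (n + 1))⁻¹ y)
    simp only [Equiv.Perm.inv_def, Equiv.apply_symm_apply] at h2
    exact h2.symm

-- conjugation membership in zpowers transfers to restrictions
lemma permCongr_mem_zpowers_iff {s : Set α} {t : Set β}
    (e : α ≃ β) (he : ∀ a, a ∈ s ↔ e a ∈ t)
    {u : Equiv.Perm α} (hu : ∀ x, x ∈ s ↔ u x ∈ s) (hus : ∀ x, x ∉ s → u x = x)
    {d : Equiv.Perm β} (hd : ∀ y, y ∈ t ↔ d y ∈ t) (hds : ∀ y, y ∉ t → d y = y) :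
    e.permCongr u ∈ Subgroup.zpowers d ↔
      (e.subtypeEquiv he).permCongr (u.subtypePerm (fun x => (hu x).symm)) ∈
        Subgroup.zpowers (d.subtypePerm (fun x => (hd x).symm)) := by
  rw [Subgroup.mem_zpowers_iff, Subgroup.mem_zpowers_iff]
  refine exists_congr fun m => ?_
  rw [Equiv.Perm.subtypePerm_zpow]
  rw [eq_comm, DGI2.permCongr_subtypeEquiv_eq e he hu hus (invariant_zpow hd m)
    (fun y hy => Equiv.Perm.zpow_apply_eq_self_of_apply_eq_self (hds y hy) m), eq_comm]

end DGI3

namespace DGI4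

open Equiv Equiv.Perm Finset

variable {α β : Type*} [Fintype α] [DecidableEq α] [Fintype β] [DecidableEq β]

lemma support_eq_of_mem_zpowers {p : ℕ} (hp : p.Prime) {d t : Equiv.Perm β}
    (hd : d.IsCycle) (hdp : d.support.card = p)
    (ht : t ∈ Subgroup.zpowers d) (h1 : t ≠ 1) : t.support = d.support := by
  have ho : orderOf d = p := by rw [hd.orderOf, hdp]
  have hz := DGI.zpowers_eq_of_ne_one hp ho ht h1
  apply le_antisymm
  · obtain ⟨m, rfl⟩ := ht
    exact Equiv.Perm.support_zpow_le d m
  · have hmem : d ∈ Subgroup.zpowers t := by rw [hz]; exact Subgroup.mem_zpowers d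
    obtain ⟨m, hm⟩ := hmem
    rw [← hm]
    exact Equiv.Perm.support_zpow_le t m

lemma isCycle_of_mem_zpowers {p : ℕ} (hp : p.Prime) {d w : Equiv.Perm β}
    (hd : d.IsCycle) (hdp : d.support.card = p)
    (hw : w ∈ Subgroup.zpowers d) (h1 : w ≠ 1) : w.IsCycle := by
  have ho : orderOf d = p := by rw [hd.orderOf, hdp]
  have hz := DGI.zpowers_eq_of_ne_one hp ho hw h1
  have hdw : d ∈ Subgroup.zpowers w := by rw [hz]; exact Subgroup.mem_zpowers d
  obtain ⟨j, hj⟩ := hdw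
  have hsupp := support_eq_of_mem_zpowers hp hd hdp hw h1
  obtain ⟨x, hx⟩ : w.support.Nonempty := by
    rw [Finset.nonempty_iff_ne_empty, ne_eq, Equiv.Perm.support_eq_empty_iff]; exact h1
  refine ⟨x, Equiv.Perm.mem_support.mp hx, fun y hy => ?_⟩
  have hxd : d x ≠ x := by rw [← Equiv.Perm.mem_support, ← hsupp]; exact hx
  have hyd : d y ≠ y := by
    rw [← Equiv.Perm.mem_support, ← hsupp, Equiv.Perm.mem_support]; exact hy
  obtain ⟨i, hi⟩ := hd.sameCycle hxd hyd
  exact ⟨j * i, by rw [zpow_mul]; rw [show w ^ j = d from hj, hi]⟩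

lemma natcard_conjugators {p : ℕ} (hp : p.Prime)
    (c : Equiv.Perm α) (hc : c.IsCycle) (hcs : c.support = Finset.univ)
    (hA : Fintype.card α = p)
    (w : Equiv.Perm β) (hw : w.IsCycle) (hws : w.support = Finset.univ)
    (hB : Fintype.card β = p) :
    Nat.card {e : α ≃ β // e.permCongr c = w} = p := by
  have hpos : 0 < Fintype.card α := by rw [hA]; exact hp.pos
  have hne : Nonempty α := Fintype.card_pos_iff.mp hpos
  let a0 : α := Classical.arbitrary α
  have hmc : ∀ x : α, c x ≠ x := fun x => Equiv.Perm.mem_support.mp (hcs ▸ Finset.mem_univ x)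
  have hmw : ∀ y : β, w y ≠ y := fun y => Equiv.Perm.mem_support.mp (hws ▸ Finset.mem_univ y)
  have hg : Fintype.card β = Fintype.card α := hB.trans hA.symm
  let g : β ≃ α := Fintype.equivOfCardEq hg
  have hw'c : (g.permCongr w).IsCycle := DGI.isCycle_permCongr g hw
  have hcards : c.support.card = (g.permCongr w).support.card := by
    rw [hcs, DGI.support_permCongr, Finset.card_map, hws, Finset.card_univ, Finset.card_univ,
      hA, hB]
  obtain ⟨z, hz⟩ := isConj_iff.mp (hc.isConj hw'c hcards)
  let e0 : α ≃ β := (z : Equiv.Perm α).trans g.symm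
  have he0 : e0.permCongr c = w := by
    ext y
    have hz' : z (c (z.symm (g y))) = g (w y) := by
      have h := Equiv.ext_iff.mp hz (g y)
      simp only [Equiv.Perm.mul_apply, Equiv.permCongr_apply, Equiv.symm_apply_apply] at h
      exact h
    simp only [e0, Equiv.permCongr_apply, Equiv.trans_apply, Equiv.symm_trans_apply,
      Equiv.symm_symm]
    rw [hz', Equiv.symm_apply_apply]
  have key : ∀ (e : α ≃ β), e.permCongr c = w → ∀ (i : ℤ) (x : α),
      e ((c ^ i) x) = (w ^ i) (e x) := by
    intro e he i x
    have h1 : e.permCongr (c ^ i) = w ^ i := by rw [DGI.permCongr_zpow, he]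
    have h2 := Equiv.ext_iff.mp h1 (e x)
    simpa [Equiv.permCongr_apply] using h2
  have hbij : Function.Bijective
      (fun (e : {e : α ≃ β // e.permCongr c = w}) => (e : α ≃ β) a0) := by
    constructor
    · rintro ⟨e1, he1⟩ ⟨e2, he2⟩ h12
      simp only at h12
      refine Subtype.ext (Equiv.ext fun x => ?_)
      obtain ⟨i, hi⟩ := hc.sameCycle (hmc a0) (hmc x)
      rw [← hi, key e1 he1, key e2 he2, h12]
    · intro b
      obtain ⟨i, hi⟩ := hw.sameCycle (hmw (e0 a0)) (hmw b)
      refine ⟨⟨e0.trans (w ^ i : Equiv.Perm β), ?_⟩, ?_⟩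
      · ext y
        simp only [Equiv.permCongr_apply, Equiv.trans_apply, Equiv.symm_trans_apply]
        have h := Equiv.ext_iff.mp he0 (((w : Equiv.Perm β) ^ i).symm y)
        simp only [Equiv.permCongr_apply] at h
        rw [h]
        have hcomm : w ^ i * w * (w ^ i)⁻¹ = w := by group
        have h2 := Equiv.ext_iff.mp hcomm y
        simpa [Equiv.Perm.mul_apply] using h2
      · simpa using hi
  rw [Nat.card_eq_fintype_card, Fintype.card_of_bijective hbij, hB]

end DGI4
namespace DGI5

open Equiv Equiv.Perm Finset

variable {α β : Type*} [Fintype α] [DecidableEq α] [Fintype β] [DecidableEq β]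

lemma permCongr_one (e : α ≃ β) : e.permCongr (1 : Equiv.Perm α) = 1 := by
  ext x; simp

lemma natcard_conj_into_zpowers {p : ℕ} (hp : p.Prime)
    (c : Equiv.Perm α) (hc : c.IsCycle) (hcs : c.support = Finset.univ)
    (hA : Fintype.card α = p)
    (d : Equiv.Perm β) (hd : d.IsCycle) (hds : d.support = Finset.univ)
    (hB : Fintype.card β = p) :
    Nat.card {e : α ≃ β // e.permCongr c ∈ Subgroup.zpowers d} = p * (p - 1) := by
  classical
  have hdp : d.support.card = p := by rw [hds, Finset.card_univ, hB]
  set Z : Finset (Equiv.Perm β) :=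
    (Finset.univ.filter (· ∈ Subgroup.zpowers d)).erase 1 with hZ
  have hcne : c ≠ 1 := hc.ne_one
  have hmem : ∀ e : α ≃ β, e.permCongr c ∈ Subgroup.zpowers d → e.permCongr c ∈ Z := by
    intro e he
    refine Finset.mem_erase.mpr ⟨?_, Finset.mem_filter.mpr ⟨Finset.mem_univ _, he⟩⟩
    intro h1
    exact hcne (e.permCongr.injective (h1.trans (permCongr_one e).symm))
  rw [DGI3.natcard_subtype_fiber_sum _ (fun e => e.permCongr c) Z hmem]
  have hterm : ∀ w ∈ Z,
      Nat.card {e : α ≃ β // e.permCongr c ∈ Subgroup.zpowers d ∧ e.permCongr c = w} = p := by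
    intro w hwZ
    obtain ⟨hw1, hw2⟩ := Finset.mem_erase.mp hwZ
    have hwz : w ∈ Subgroup.zpowers d := (Finset.mem_filter.mp hw2).2
    have hwc : w.IsCycle := DGI4.isCycle_of_mem_zpowers hp hd hdp hwz hw1
    have hwsupp : w.support = Finset.univ := by
      rw [DGI4.support_eq_of_mem_zpowers hp hd hdp hwz hw1, hds]
    have hnc := DGI4.natcard_conjugators hp c hc hcs hA w hwc hwsupp hB
    rw [← hnc]
    refine Nat.card_congr (Equiv.subtypeEquivRight fun e => ?_)
    constructor
    · rintro ⟨_, h⟩; exact h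
    · intro h; exact ⟨h ▸ hwz, h⟩
  rw [Finset.sum_congr rfl hterm, Finset.sum_const, smul_eq_mul]
  have hfcard : (Finset.univ.filter (· ∈ Subgroup.zpowers d)).card = p := by
    rw [← Fintype.card_subtype, ← Nat.card_eq_fintype_card, Nat.card_zpowers, hd.orderOf, hdp]
  have hZcard : Z.card = p - 1 := by
    rw [hZ, Finset.card_erase_of_mem
      (Finset.mem_filter.mpr ⟨Finset.mem_univ _, Subgroup.one_mem _⟩), hfcard]
  rw [hZcard, Nat.mul_comm]

end DGI5
namespace DGI6

open Equiv Equiv.Perm Finset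

variable {α : Type*} [Fintype α] [DecidableEq α]

lemma compl_invariance {u : Equiv.Perm α} {F : Finset α}
    (h : Disjoint u.support F) :
    ∀ x, x ∈ ((↑F : Set α))ᶜ ↔ u x ∈ ((↑F : Set α))ᶜ := by
  intro x
  have h2 := DGI2.invariant_of_disjoint h x
  simp only [Set.mem_compl_iff, Finset.mem_coe]
  exact not_congr h2

lemma fixes_of_disjoint {u : Equiv.Perm α} {F : Finset α}
    (h : Disjoint u.support F) : ∀ x, x ∉ ((↑F : Set α))ᶜ → u x = x := by
  intro x hx
  simp only [Set.mem_compl_iff, Finset.mem_coe, not_not] at hx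
  exact Equiv.Perm.notMem_support.mp (Finset.disjoint_right.mp h hx)

lemma disjoint_support_subtypePerm {s : Set α} [Fintype s]
    {u v : Equiv.Perm α} (hu : ∀ x, x ∈ s ↔ u x ∈ s) (hv : ∀ x, x ∈ s ↔ v x ∈ s)
    (h : Disjoint u.support v.support) :
    Disjoint (u.subtypePerm (fun x => (hu x).symm)).support (v.subtypePerm (fun x => (hv x).symm)).support := by
  rw [Finset.disjoint_left] at h ⊢
  intro x hx hx'
  exact h ((DGI2.mem_support_subtypePerm hu x).mp hx) ((DGI2.mem_support_subtypePerm hv x).mp hx')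

lemma support_subtypePerm_self {c : Equiv.Perm α}
    (h : ∀ x, x ∈ (↑c.support : Set α) ↔ c x ∈ (↑c.support : Set α)) :
    (c.subtypePerm (fun x => (h x).symm)).support = Finset.univ := by
  apply Finset.eq_univ_iff_forall.mpr
  intro x
  exact (DGI2.mem_support_subtypePerm h x).mpr (by exact_mod_cast x.2)

lemma card_coe_set (F : Finset α) [Fintype (↑F : Set α)] :
    Fintype.card (↑F : Set α) = F.card := by
  rw [← Nat.card_eq_fintype_card, Nat.card_coe_set_eq, Set.ncard_coe_finset]

lemma main_count {p : ℕ} (hp : p.Prime) :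
    ∀ (n : ℕ) (α β : Type) [Fintype α] [DecidableEq α] [Fintype β] [DecidableEq β]
      (L : List (Equiv.Perm α)) (M : Finset (Equiv.Perm β)),
      L.length = n →
      (∀ c ∈ L, c.IsCycle ∧ c.support.card = p) →
      L.Pairwise (fun c c' => _root_.Disjoint c.support c'.support) →
      (∀ d ∈ M, d.IsCycle ∧ d.support.card = p) →
      ((M : Set (Equiv.Perm β)).Pairwise (fun d d' => _root_.Disjoint d.support d'.support)) →
      Fintype.card α = Fintype.card β →
      Nat.card {e : α ≃ β // ∀ c ∈ L, ∃ d ∈ M, e.permCongr c ∈ Subgroup.zpowers d}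
        = (Fintype.card α - n * p).factorial * (M.card.descFactorial n) * (p * (p - 1)) ^ n := by
  intro n
  induction n with
  | zero =>
    intro α β _ _ _ _ L M hlen hL hLp hM hMp hcard
    rw [List.length_eq_zero_iff] at hlen
    subst hlen
    have h1 : Nat.card {e : α ≃ β // ∀ c ∈ ([] : List (Equiv.Perm α)), ∃ d ∈ M,
        e.permCongr c ∈ Subgroup.zpowers d} = Nat.card (α ≃ β) :=
      Nat.card_congr (Equiv.subtypeUnivEquiv (fun e => by simp))
    rw [h1, Nat.card_eq_fintype_card, Fintype.card_equiv (Fintype.equivOfCardEq hcard)]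
    simp
  | succ n IH =>
    intro α β iA dA iB dB L M hlen hL hLp hM hMp hcard
    classical
    obtain ⟨c, L', rfl⟩ : ∃ c L'', L = c :: L'' := by
      cases L with
      | nil => simp at hlen
      | cons a l => exact ⟨a, l, rfl⟩
    have hlen' : L'.length = n := by simpa using hlen
    have hcGood := hL c (List.mem_cons_self (a := c) (l := L'))
    have hcne : c ≠ 1 := hcGood.1.ne_one
    have hLp' := (List.pairwise_cons.mp hLp).2
    have hheads := (List.pairwise_cons.mp hLp).1
    have hne1 : ∀ (e : α ≃ β) (u : Equiv.Perm α), u ≠ 1 → e.permCongr u ≠ 1 := by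
      intro e u hu h
      exact hu (e.permCongr.injective (h.trans (DGI5.permCongr_one e).symm))
    have hUM : ∀ (e : α ≃ β) (u : Equiv.Perm α), u ≠ 1 → ∀ d₁ ∈ M, ∀ d₂ ∈ M,
        e.permCongr u ∈ Subgroup.zpowers d₁ → e.permCongr u ∈ Subgroup.zpowers d₂ →
        d₁ = d₂ := by
      intro e u hu d₁ h₁ d₂ h₂ hz₁ hz₂
      by_contra hne
      have hw1 := hne1 e u hu
      have hs1 := DGI4.support_eq_of_mem_zpowers hp (hM d₁ h₁).1 (hM d₁ h₁).2 hz₁ hw1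
      have hs2 := DGI4.support_eq_of_mem_zpowers hp (hM d₂ h₂).1 (hM d₂ h₂).2 hz₂ hw1
      have hdisj : _root_.Disjoint d₁.support d₂.support :=
        hMp (Finset.mem_coe.mpr h₁) (Finset.mem_coe.mpr h₂) hne
      have heq : d₁.support = d₂.support := hs1.symm.trans hs2
      rw [heq, disjoint_self] at hdisj
      have hcard2 : d₂.support.card = p := (hM d₂ h₂).2
      rw [hdisj] at hcard2
      simp only [Finset.bot_eq_empty, Finset.card_empty] at hcard2
      exact hp.ne_zero hcard2.symm
    have hUL : ∀ (e : α ≃ β), ∀ d₀ ∈ M, ∀ u v : Equiv.Perm α,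
        _root_.Disjoint u.support v.support → u ≠ 1 → v ≠ 1 →
        e.permCongr u ∈ Subgroup.zpowers d₀ → e.permCongr v ∈ Subgroup.zpowers d₀ →
        False := by
      intro e d₀ h₀ u v hdisj hu hv hzu hzv
      have hsu := DGI4.support_eq_of_mem_zpowers hp (hM d₀ h₀).1 (hM d₀ h₀).2 hzu (hne1 e u hu)
      have hsv := DGI4.support_eq_of_mem_zpowers hp (hM d₀ h₀).1 (hM d₀ h₀).2 hzv (hne1 e v hv)
      rw [DGI.support_permCongr] at hsu hsv
      have heq : u.support = v.support :=
        Finset.map_injective e.toEmbedding (hsu.trans hsv.symm)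
      rw [heq, disjoint_self] at hdisj
      exact hv (Equiv.Perm.support_eq_empty_iff.mp (by simpa using hdisj))
    set f : (α ≃ β) → Equiv.Perm β := fun e =>
      if h : ∃ d ∈ M, e.permCongr c ∈ Subgroup.zpowers d then h.choose else 1 with hfdef
    have hf : ∀ e : α ≃ β,
        (∀ c' ∈ (c :: L'), ∃ d ∈ M, e.permCongr c' ∈ Subgroup.zpowers d) → f e ∈ M := by
      intro e he
      have h := he c (List.mem_cons_self (a := c) (l := L'))
      simp only [hfdef, dif_pos h]
      exact h.choose_spec.1
    have hfspec : ∀ e : α ≃ β,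
        (∀ c' ∈ (c :: L'), ∃ d ∈ M, e.permCongr c' ∈ Subgroup.zpowers d) →
        e.permCongr c ∈ Subgroup.zpowers (f e) := by
      intro e he
      have h := he c (List.mem_cons_self (a := c) (l := L'))
      simp only [hfdef, dif_pos h]
      exact h.choose_spec.2
    rw [DGI3.natcard_subtype_fiber_sum
      (fun e : α ≃ β => ∀ c' ∈ (c :: L'), ∃ d ∈ M, e.permCongr c' ∈ Subgroup.zpowers d)
      f M hf]
    have hsummand : ∀ d₀ ∈ M,
        Nat.card {e : α ≃ β //
          (∀ c' ∈ (c :: L'), ∃ d ∈ M, e.permCongr c' ∈ Subgroup.zpowers d) ∧ f e = d₀}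
        = (p * (p - 1)) * ((Fintype.card α - p - n * p).factorial
            * ((M.card - 1).descFactorial n) * (p * (p - 1)) ^ n) := by
      intro d₀ hd₀M
      have hd₀Good := hM d₀ hd₀M
      set s : Set α := (↑c.support : Set α) with hsdef
      set t : Set β := (↑d₀.support : Set β) with htdef
      have hsinv : ∀ x, x ∈ s ↔ c x ∈ s := by
        intro x
        simp only [hsdef, Finset.mem_coe]
        exact Equiv.Perm.apply_mem_support.symm
      have htinv : ∀ y, y ∈ t ↔ d₀ y ∈ t := by
        intro y
        simp only [htdef, Finset.mem_coe]
        exact Equiv.Perm.apply_mem_support.symm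
      have hsfix : ∀ x, x ∉ s → c x = x := by
        intro x hx
        exact Equiv.Perm.notMem_support.mp (by simpa [hsdef] using hx)
      have htfix : ∀ y, y ∉ t → d₀ y = y := by
        intro y hy
        exact Equiv.Perm.notMem_support.mp (by simpa [htdef] using hy)
      set cs : Equiv.Perm s := c.subtypePerm (fun x => (hsinv x).symm) with hcsdef
      set dt : Equiv.Perm t := d₀.subtypePerm (fun x => (htinv x).symm) with hdtdef
      have hscard : Fintype.card s = p := by
        exact (DGI6.card_coe_set c.support).trans hcGood.2
      have htcard : Fintype.card t = p := by
        exact (DGI6.card_coe_set d₀.support).trans hd₀Good.2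
      have hmapsto : ∀ e : α ≃ β, e.permCongr c ∈ Subgroup.zpowers d₀ →
          ∀ a, a ∈ s ↔ e a ∈ t := by
        intro e hz a
        have hsupp := DGI4.support_eq_of_mem_zpowers hp hd₀Good.1 hd₀Good.2 hz (hne1 e c hcne)
        rw [DGI.support_permCongr] at hsupp
        constructor
        · intro ha
          have h2 : e a ∈ c.support.map e.toEmbedding :=
            Finset.mem_map_of_mem _ (by simpa [hsdef] using ha)
          rw [hsupp] at h2
          simpa [htdef] using h2
        · intro ha
          have h2 : e a ∈ c.support.map e.toEmbedding := by
            rw [hsupp]; simpa [htdef] using ha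
          obtain ⟨x, hx, hxe⟩ := Finset.mem_map.mp h2
          have hxa : x = a := e.injective hxe
          subst hxa
          simpa [hsdef] using hx
      have hmapsto' : ∀ (e : α ≃ β) (e₀ : s ≃ t), (∀ x : s, e x = e₀ x) →
          ∀ a, a ∈ s ↔ e a ∈ t := by
        intro e e₀ hag a
        constructor
        · intro ha
          rw [hag ⟨a, ha⟩]
          exact (e₀ ⟨a, ha⟩).2
        · intro ha
          obtain ⟨x, hx⟩ := e₀.surjective ⟨e a, ha⟩
          have h2 : e ↑x = e a := by rw [hag x, hx]
          have h3 := e.injective h2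
          rw [← h3]
          exact x.2
      have hst : Fintype.card s = Fintype.card t := by rw [hscard, htcard]
      set ρ : (α ≃ β) → (s ≃ t) := fun e =>
        if h : ∀ a, a ∈ s ↔ e a ∈ t then e.subtypeEquiv h else Fintype.equivOfCardEq hst
        with hρdef
      have hrho : ∀ (e : α ≃ β) (h : ∀ a, a ∈ s ↔ e a ∈ t), ρ e = e.subtypeEquiv h := by
        intro e h
        simp only [hρdef]
        rw [dif_pos h]
      have hcond : ∀ e : α ≃ β,
          ((∀ c' ∈ (c :: L'), ∃ d ∈ M, e.permCongr c' ∈ Subgroup.zpowers d) ∧ f e = d₀) ↔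
          ((e.permCongr c ∈ Subgroup.zpowers d₀) ∧
           ∀ c' ∈ L', ∃ d ∈ M.erase d₀, e.permCongr c' ∈ Subgroup.zpowers d) := by
        intro e
        constructor
        · rintro ⟨hP, hfe⟩
          have hz : e.permCongr c ∈ Subgroup.zpowers d₀ := hfe ▸ hfspec e hP
          refine ⟨hz, ?_⟩
          intro c' hc'
          obtain ⟨d, hdM, hzd⟩ := hP c' (List.mem_cons_of_mem c hc')
          refine ⟨d, Finset.mem_erase.mpr ⟨?_, hdM⟩, hzd⟩
          rintro rfl
          exact hUL e d hdM c c' (hheads c' hc') hcne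
            (hL c' (List.mem_cons_of_mem c hc')).1.ne_one hz hzd
        · rintro ⟨hz, hQ⟩
          have hP : ∀ c'' ∈ (c :: L'), ∃ d ∈ M, e.permCongr c'' ∈ Subgroup.zpowers d := by
            intro c'' hc''
            rcases List.mem_cons.mp hc'' with rfl | hc''
            · exact ⟨d₀, hd₀M, hz⟩
            · obtain ⟨d, hdM, hzd⟩ := hQ c'' hc''
              exact ⟨d, Finset.mem_of_mem_erase hdM, hzd⟩
          exact ⟨hP, hUM e c hcne (f e) (hf e hP) d₀ hd₀M (hfspec e hP) hz⟩
      set E₀ : Finset (s ≃ t) :=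
        Finset.univ.filter (fun e₀ : s ≃ t => e₀.permCongr cs ∈ Subgroup.zpowers dt)
        with hE₀def
      have hmem2 : ∀ e : α ≃ β,
          ((∀ c' ∈ (c :: L'), ∃ d ∈ M, e.permCongr c' ∈ Subgroup.zpowers d) ∧ f e = d₀) →
          ρ e ∈ E₀ := by
        intro e he
        have hz := ((hcond e).mp he).1
        have hmap := hmapsto e hz
        rw [hrho e hmap, hE₀def, Finset.mem_filter]
        exact ⟨Finset.mem_univ _,
          (DGI3.permCongr_mem_zpowers_iff e hmap hsinv hsfix htinv htfix).mp hz⟩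
      rw [DGI3.natcard_subtype_fiber_sum
        (fun e : α ≃ β =>
          (∀ c' ∈ (c :: L'), ∃ d ∈ M, e.permCongr c' ∈ Subgroup.zpowers d) ∧ f e = d₀)
        ρ E₀ hmem2]
      -- restricted data
      have hinvL : ∀ c' ∈ L', ∀ x, x ∈ sᶜ ↔ c' x ∈ sᶜ := by
        intro c' hc'
        exact DGI6.compl_invariance ((hheads c' hc').symm)
      have hfixL : ∀ c' ∈ L', ∀ x, x ∉ sᶜ → c' x = x := fun c' hc' =>
        DGI6.fixes_of_disjoint ((hheads c' hc').symm)
      set L'' : List (Equiv.Perm ↥(sᶜ)) :=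
        L'.pmap (fun c' hc' => c'.subtypePerm (fun x => (hinvL c' hc' x).symm)) (fun _ h => h) with hL''def
      have hdisjM : ∀ d ∈ M.erase d₀, _root_.Disjoint d.support d₀.support := by
        intro d hd
        exact hMp (Finset.mem_coe.mpr (Finset.mem_of_mem_erase hd))
          (Finset.mem_coe.mpr hd₀M) (Finset.ne_of_mem_erase hd)
      have hinvM : ∀ d ∈ M.erase d₀, ∀ y, y ∈ tᶜ ↔ d y ∈ tᶜ := fun d hd =>
        DGI6.compl_invariance (hdisjM d hd)
      have hfixM : ∀ d ∈ M.erase d₀, ∀ y, y ∉ tᶜ → d y = y := fun d hd =>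
        DGI6.fixes_of_disjoint (hdisjM d hd)
      set M' : Finset (Equiv.Perm ↥(tᶜ)) :=
        (M.erase d₀).attach.image
          (fun (d : {x : Equiv.Perm β // x ∈ M.erase d₀}) =>
            Equiv.Perm.subtypePerm (↑d) (fun x => (hinvM (↑d) d.prop x).symm)) with hM'def
      have hfibcard : ∀ e₀ ∈ E₀,
          Nat.card {e : α ≃ β //
            ((∀ c' ∈ (c :: L'), ∃ d ∈ M, e.permCongr c' ∈ Subgroup.zpowers d) ∧ f e = d₀)
            ∧ ρ e = e₀}
          = Nat.card {e' : ↥(sᶜ) ≃ ↥(tᶜ) // ∀ c'' ∈ L'', ∃ d' ∈ M',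
              e'.permCongr c'' ∈ Subgroup.zpowers d'} := by
        intro e₀ he₀
        have he₀z : e₀.permCongr cs ∈ Subgroup.zpowers dt := by
          have := he₀
          rw [hE₀def, Finset.mem_filter] at this
          exact this.2
        have hiff : ∀ e : α ≃ β,
            (((∀ c' ∈ (c :: L'), ∃ d ∈ M, e.permCongr c' ∈ Subgroup.zpowers d) ∧ f e = d₀)
              ∧ ρ e = e₀) ↔
            ((∀ x : s, e x = e₀ x) ∧ ∀ c' ∈ L', ∃ d ∈ M.erase d₀,
              e.permCongr c' ∈ Subgroup.zpowers d) := by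
          intro e
          constructor
          · rintro ⟨hPf, hre⟩
            obtain ⟨hz, hQ⟩ := (hcond e).mp hPf
            have hmap := hmapsto e hz
            rw [hrho e hmap] at hre
            refine ⟨?_, hQ⟩
            intro x
            have h4 := Equiv.ext_iff.mp hre x
            simpa [Subtype.ext_iff] using h4
          · rintro ⟨hag, hQ⟩
            have hmap := hmapsto' e e₀ hag
            have hrestr : e.subtypeEquiv hmap = e₀ := by
              ext x
              simp [hag x]
            have hz : e.permCongr c ∈ Subgroup.zpowers d₀ := by
              rw [DGI3.permCongr_mem_zpowers_iff e hmap hsinv hsfix htinv htfix, hrestr]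
              exact he₀z
            refine ⟨(hcond e).mpr ⟨hz, hQ⟩, ?_⟩
            rw [hrho e hmap, hrestr]
        refine Nat.card_congr ?_
        calc {e : α ≃ β //
            ((∀ c' ∈ (c :: L'), ∃ d ∈ M, e.permCongr c' ∈ Subgroup.zpowers d) ∧ f e = d₀)
            ∧ ρ e = e₀}
            ≃ {e : α ≃ β // (∀ x : s, e x = e₀ x) ∧ ∀ c' ∈ L', ∃ d ∈ M.erase d₀,
                e.permCongr c' ∈ Subgroup.zpowers d} := Equiv.subtypeEquivRight hiff
          _ ≃ {w : {e : α ≃ β // ∀ x : s, e x = e₀ x} // ∀ c' ∈ L', ∃ d ∈ M.erase d₀,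
                (↑w : α ≃ β).permCongr c' ∈ Subgroup.zpowers d} :=
              (Equiv.subtypeSubtypeEquivSubtypeInter _ _).symm
          _ ≃ {e' : ↥(sᶜ) ≃ ↥(tᶜ) // ∀ c'' ∈ L'', ∃ d' ∈ M',
                e'.permCongr c'' ∈ Subgroup.zpowers d'} := by
              refine (Equiv.Set.compl e₀).subtypeEquiv ?_
              intro w
              have hmapc : ∀ a, a ∈ sᶜ ↔ (↑w : α ≃ β) a ∈ tᶜ := by
                intro a
                exact not_congr (hmapsto' (↑w) e₀ w.2 a)
              have hWw : ((Equiv.Set.compl e₀) w : ↥(sᶜ) ≃ ↥(tᶜ))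
                  = (↑w : α ≃ β).subtypeEquiv hmapc := rfl
              constructor
              · intro hQ c'' hc''
                rw [hL''def] at hc''
                obtain ⟨c', hc', rfl⟩ := List.mem_pmap.mp hc''
                obtain ⟨d, hdM, hzd⟩ := hQ c' hc'
                refine ⟨(d : Equiv.Perm β).subtypePerm (fun x => (hinvM d hdM x).symm),
                  Finset.mem_image.mpr ⟨⟨d, hdM⟩, Finset.mem_attach _ _, rfl⟩, ?_⟩
                rw [hWw]
                exact (DGI3.permCongr_mem_zpowers_iff (↑w) hmapc (hinvL c' hc')
                  (hfixL c' hc') (hinvM d hdM) (hfixM d hdM)).mp hzd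
              · intro hQ c' hc'
                have hc'' : c'.subtypePerm (fun x => (hinvL c' hc' x).symm) ∈ L'' := by
                  rw [hL''def]
                  exact List.mem_pmap.mpr ⟨c', hc', rfl⟩
                obtain ⟨d', hd'M, hzd'⟩ := hQ _ hc''
                rw [hM'def] at hd'M
                obtain ⟨⟨d, hdM⟩, _, rfl⟩ := Finset.mem_image.mp hd'M
                refine ⟨d, hdM, ?_⟩
                rw [hWw] at hzd'
                exact (DGI3.permCongr_mem_zpowers_iff (↑w) hmapc (hinvL c' hc')
                  (hfixL c' hc') (hinvM d hdM) (hfixM d hdM)).mpr hzd'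
      -- cardinalities
      have hcplA : Fintype.card ↥(sᶜ) = Fintype.card α - p := by
        rw [Fintype.card_compl_set, hscard]
      have hcplB : Fintype.card ↥(tᶜ) = Fintype.card β - p := by
        rw [Fintype.card_compl_set, htcard]
      have hcplEq : Fintype.card ↥(sᶜ) = Fintype.card ↥(tᶜ) := by
        rw [hcplA, hcplB, hcard]
      have hL''len : L''.length = n := by
        rw [hL''def, List.length_pmap, hlen']
      have hL''Good : ∀ c'' ∈ L'', c''.IsCycle ∧ c''.support.card = p := by
        intro c'' hc''
        rw [hL''def] at hc''
        obtain ⟨c', hc', rfl⟩ := List.mem_pmap.mp hc''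
        have hGood := hL c' (List.mem_cons_of_mem c hc')
        have hsub : ∀ x ∈ c'.support, x ∈ sᶜ := by
          intro x hx
          simp only [Set.mem_compl_iff, hsdef, Finset.mem_coe]
          exact Finset.disjoint_right.mp (hheads c' hc') hx
        constructor
        · exact DGI2.isCycle_subtypePerm hGood.1 (hinvL c' hc') hsub
        · rw [DGI2.card_support_subtypePerm (hinvL c' hc') hsub]
          exact hGood.2
      have hL''Pair : L''.Pairwise (fun c1 c2 => _root_.Disjoint c1.support c2.support) := by
        rw [hL''def, List.pairwise_pmap]
        exact hLp'.imp (fun hd h1 h2 => DGI6.disjoint_support_subtypePerm (hinvL _ h1) (hinvL _ h2) hd)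
      have hM'Good : ∀ d' ∈ M', d'.IsCycle ∧ d'.support.card = p := by
        intro d' hd'
        rw [hM'def] at hd'
        obtain ⟨⟨d, hdM⟩, _, rfl⟩ := Finset.mem_image.mp hd'
        have hGood := hM d (Finset.mem_of_mem_erase hdM)
        have hsub : ∀ y ∈ d.support, y ∈ tᶜ := by
          intro y hy
          simp only [Set.mem_compl_iff, htdef, Finset.mem_coe]
          exact Finset.disjoint_left.mp (hdisjM d hdM) hy
        constructor
        · exact DGI2.isCycle_subtypePerm hGood.1 (hinvM d hdM) hsub
        · rw [DGI2.card_support_subtypePerm (hinvM d hdM) hsub]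
          exact hGood.2
      have hM'Pair : ((M' : Set (Equiv.Perm ↥(tᶜ)))).Pairwise
          (fun d1 d2 => _root_.Disjoint d1.support d2.support) := by
        intro x hx y hy hxy
        rw [Finset.mem_coe, hM'def] at hx hy
        obtain ⟨⟨d1, hd1⟩, _, rfl⟩ := Finset.mem_image.mp hx
        obtain ⟨⟨d2, hd2⟩, _, rfl⟩ := Finset.mem_image.mp hy
        have hd12 : d1 ≠ d2 := by
          rintro rfl
          exact hxy rfl
        exact DGI6.disjoint_support_subtypePerm (hinvM d1 hd1) (hinvM d2 hd2)
          (hMp (Finset.mem_coe.mpr (Finset.mem_of_mem_erase hd1))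
            (Finset.mem_coe.mpr (Finset.mem_of_mem_erase hd2)) hd12)
      have hM'card : M'.card = M.card - 1 := by
        rw [hM'def, Finset.card_image_of_injOn, Finset.card_attach,
          Finset.card_erase_of_mem hd₀M]
        intro x _ y _ hxy
        apply Subtype.ext
        ext z
        by_cases hz : z ∈ tᶜ
        · have h5 := Equiv.ext_iff.mp hxy ⟨z, hz⟩
          simpa [Subtype.ext_iff] using h5
        · rw [hfixM _ x.2 z hz, hfixM _ y.2 z hz]
      have hcsCyc : cs.IsCycle := by
        rw [hcsdef]
        exact DGI2.isCycle_subtypePerm hcGood.1 hsinv (fun x hx => by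
          simp only [hsdef, Finset.mem_coe]; exact hx)
      have hcsSupp : cs.support = Finset.univ := by
        rw [hcsdef]
        exact DGI6.support_subtypePerm_self hsinv
      have hdtCyc : dt.IsCycle := by
        rw [hdtdef]
        exact DGI2.isCycle_subtypePerm hd₀Good.1 htinv (fun y hy => by
          simp only [htdef, Finset.mem_coe]; exact hy)
      have hdtSupp : dt.support = Finset.univ := by
        rw [hdtdef]
        exact DGI6.support_subtypePerm_self htinv
      have hE₀card : E₀.card = p * (p - 1) := by
        have hleaf := DGI5.natcard_conj_into_zpowers hp cs hcsCyc hcsSupp hscard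
          dt hdtCyc hdtSupp htcard
        rw [Nat.card_eq_fintype_card, Fintype.card_subtype] at hleaf
        rw [hE₀def, ← hleaf]
      have hIH := IH ↥(sᶜ) ↥(tᶜ) L'' M' hL''len hL''Good hL''Pair hM'Good hM'Pair hcplEq
      rw [Finset.sum_congr rfl (fun e₀ he₀ => (hfibcard e₀ he₀).trans
        (hIH.trans (by rw [hcplA, hM'card])))]
      rw [Finset.sum_const, smul_eq_mul, hE₀card]
    rw [Finset.sum_congr rfl hsummand, Finset.sum_const, smul_eq_mul]
    have hAA : Fintype.card α - p - n * p = Fintype.card α - (n + 1) * p := by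
      rw [Nat.sub_sub, Nat.succ_mul, Nat.add_comm]
    have hdF : M.card * (M.card - 1).descFactorial n = M.card.descFactorial (n + 1) := by
      rcases Nat.eq_zero_or_pos M.card with h0 | hpos
      · rw [h0]; simp
      · obtain ⟨m, hm⟩ := Nat.exists_eq_succ_of_ne_zero hpos.ne'
        rw [hm, Nat.succ_descFactorial_succ, Nat.succ_sub_one]
    rw [← hdF, ← hAA, pow_succ]
    ring


end DGI6

namespace DGI7

open Equiv Equiv.Perm Finset

lemma natcard_setOf {X : Type*} [Fintype X] (P : X → Prop) [DecidablePred P] :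
    Nat.card {x | P x} = (Finset.univ.filter P).card := by
  rw [← Fintype.card_subtype]
  exact Nat.card_eq_fintype_card

end DGI7

/-- Let `σ₁,…,σ_k` be the disjoint `p`-cycles on the consecutive blocks of size `p` in
`{1,…,kp}`, and let `aᵢ` count the `π ∈ S_{kp}` such that
`R(π) = {r : ∃ s, πσ_rπ⁻¹ ∈ ⟨σ_s⟩}` has size exactly `i`. Then for every `i ≤ k`,
`Σ_{j=i}^{k} aⱼ·C(j,i) = ((k-i)p)!·i!·C(k,i)²·(p(p-1))ⁱ`. -/
theorem doset_generating_identity {p k : ℕ} (hp : p.Prime) (hk1 : 1 ≤ k) (hk2 : k ≤ p - 1)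
    (σ : Fin k → Equiv.Perm (Fin (k * p)))
    (hcyc : ∀ i, (σ i).IsCycle)
    (hsupp : ∀ i : Fin k,
      (σ i).support = Finset.univ.filter (fun j : Fin (k * p) => (j : ℕ) / p = (i : ℕ)))
    (a : ℕ → ℕ)
    (ha : ∀ i : ℕ, a i = Nat.card {π : Equiv.Perm (Fin (k * p)) |
        Nat.card {r : Fin k | ∃ s : Fin k,
          π * σ r * π⁻¹ ∈ Subgroup.zpowers (σ s)} = i}) :
    ∀ i ≤ k, ∑ j ∈ Finset.Icc i k, a j * j.choose i =
      ((k - i) * p).factorial * i.factorial * (k.choose i) ^ 2 * (p * (p - 1)) ^ i := by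
  classical
  intro i hik
  have hp0 : 0 < p := hp.pos
  -- block cardinality
  have hblock : ∀ r : Fin k,
      (Finset.univ.filter (fun j : Fin (k * p) => (j : ℕ) / p = (r : ℕ))).card = p := by
    intro r
    have hbound : ∀ x : Fin p, (r : ℕ) * p + (x : ℕ) < k * p := by
      intro x
      have h1 : (r : ℕ) + 1 ≤ k := r.2
      calc (r : ℕ) * p + (x : ℕ) < (r : ℕ) * p + p := Nat.add_lt_add_left x.2 _
        _ = ((r : ℕ) + 1) * p := by ring
        _ ≤ k * p := Nat.mul_le_mul_right p h1
    have himg : (Finset.univ.filter (fun j : Fin (k * p) => (j : ℕ) / p = (r : ℕ)))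
        = Finset.univ.image
            (fun x : Fin p => (⟨(r : ℕ) * p + (x : ℕ), hbound x⟩ : Fin (k * p))) := by
      ext j
      simp only [Finset.mem_filter, Finset.mem_univ, true_and, Finset.mem_image]
      constructor
      · intro hj
        refine ⟨⟨(j : ℕ) % p, Nat.mod_lt _ hp0⟩, ?_⟩
        apply Fin.ext
        simp only []
        rw [← hj]
        exact Nat.div_add_mod' _ _
      · rintro ⟨x, rfl⟩
        simp only []
        rw [mul_comm, Nat.mul_add_div hp0, Nat.div_eq_of_lt x.2, add_zero]
    rw [himg, Finset.card_image_of_injective _ ?hinj, Finset.card_univ, Fintype.card_fin]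
    case hinj =>
      intro x y hxy
      have := Fin.mk.injEq _ _ _ _ ▸ hxy
      apply Fin.ext
      have h2 : (r : ℕ) * p + (x : ℕ) = (r : ℕ) * p + (y : ℕ) := by
        exact congrArg Fin.val hxy
      omega
  have hGood : ∀ r : Fin k, (σ r).IsCycle ∧ (σ r).support.card = p := by
    intro r
    exact ⟨hcyc r, by rw [hsupp r]; exact hblock r⟩
  have hdisjσ : ∀ r r' : Fin k, r ≠ r' →
      _root_.Disjoint (σ r).support (σ r').support := by
    intro r r' hne
    rw [hsupp r, hsupp r', Finset.disjoint_left]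
    intro j hj hj'
    simp only [Finset.mem_filter, Finset.mem_univ, true_and] at hj hj'
    exact hne (Fin.ext (hj ▸ hj'))
  have hσinj : Function.Injective σ := by
    intro r1 r2 h
    by_contra hne
    have hd := hdisjσ r1 r2 hne
    rw [h, disjoint_self] at hd
    have := (hGood r2).2
    rw [hd] at this
    simp only [Finset.bot_eq_empty, Finset.card_empty] at this
    exact hp.ne_zero this.symm
  -- Finset version of R(π)
  set F : Equiv.Perm (Fin (k * p)) → Finset (Fin k) := fun π =>
    Finset.univ.filter (fun r => ∃ s : Fin k,
      π * σ r * π⁻¹ ∈ Subgroup.zpowers (σ s)) with hFdef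
  have ha' : ∀ j, a j = (Finset.univ.filter
      (fun π : Equiv.Perm (Fin (k * p)) => (F π).card = j)).card := by
    intro j
    rw [ha j, ← DGI7.natcard_setOf]
    have hin : ∀ π : Equiv.Perm (Fin (k * p)),
        Nat.card {r : Fin k | ∃ s : Fin k, π * σ r * π⁻¹ ∈ Subgroup.zpowers (σ s)}
          = (F π).card := by
      intro π
      rw [DGI7.natcard_setOf]
    simp only [hin]
  -- switch to sum over all permutations
  have hstep1 : ∑ j ∈ Finset.Icc i k, a j * j.choose i
      = ∑ π : Equiv.Perm (Fin (k * p)), ((F π).card).choose i := by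
    have hsub : Finset.Icc i k ⊆ Finset.Icc 0 k := by
      intro j hj
      simp only [Finset.mem_Icc] at hj ⊢
      omega
    rw [Finset.sum_subset hsub]
    · rw [← Finset.sum_fiberwise_of_maps_to (g := fun π => (F π).card)
        (t := Finset.Icc 0 k) (fun π _ => by
          simp only [Finset.mem_Icc]
          exact ⟨Nat.zero_le _, le_trans (Finset.card_filter_le _ _) (by
            simp [Finset.card_univ])⟩)]
      refine Finset.sum_congr rfl fun j hj => ?_
      rw [ha' j]
      rw [Finset.sum_congr rfl (fun π hπ => by
        rw [(Finset.mem_filter.mp hπ).2])]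
      rw [Finset.sum_const, smul_eq_mul]
    · intro j hj hj2
      have : j < i := by
        simp only [Finset.mem_Icc] at hj hj2
        omega
      rw [Nat.choose_eq_zero_of_lt this, Nat.mul_zero]
  -- switch to sum over pairs
  have hstep2 : ∑ π : Equiv.Perm (Fin (k * p)), ((F π).card).choose i
      = ∑ S ∈ Finset.powersetCard i (Finset.univ : Finset (Fin k)),
          (Finset.univ.filter (fun π : Equiv.Perm (Fin (k * p)) => S ⊆ F π)).card := by
    have h1 : ∀ π : Equiv.Perm (Fin (k * p)), ((F π).card).choose i
        = ∑ S ∈ Finset.powersetCard i (Finset.univ : Finset (Fin k)),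
            (if S ⊆ F π then 1 else 0) := by
      intro π
      rw [← Finset.card_powersetCard]
      have h2 : Finset.powersetCard i (F π)
          = (Finset.powersetCard i (Finset.univ : Finset (Fin k))).filter (· ⊆ F π) := by
        ext S
        simp only [Finset.mem_powersetCard, Finset.mem_filter]
        constructor
        · rintro ⟨h3, h4⟩
          exact ⟨⟨Finset.subset_univ _, h4⟩, h3⟩
        · rintro ⟨⟨_, h4⟩, h3⟩
          exact ⟨h3, h4⟩
      rw [h2, Finset.card_filter]
    simp_rw [h1]
    rw [Finset.sum_comm]
    refine Finset.sum_congr rfl fun S _ => ?_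
    rw [Finset.card_filter]
  -- count for a fixed subset S
  have hstep3 : ∀ S ∈ Finset.powersetCard i (Finset.univ : Finset (Fin k)),
      (Finset.univ.filter (fun π : Equiv.Perm (Fin (k * p)) => S ⊆ F π)).card
        = (k * p - i * p).factorial * (k.descFactorial i) * (p * (p - 1)) ^ i := by
    intro S hS
    obtain ⟨-, hScard⟩ := Finset.mem_powersetCard.mp hS
    set LS : List (Equiv.Perm (Fin (k * p))) := S.toList.map σ with hLSdef
    set MS : Finset (Equiv.Perm (Fin (k * p))) := Finset.univ.image σ with hMSdef
    have hLSlen : LS.length = i := by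
      rw [hLSdef, List.length_map, Finset.length_toList, hScard]
    have hLSGood : ∀ c ∈ LS, c.IsCycle ∧ c.support.card = p := by
      intro c hc
      obtain ⟨r, _, rfl⟩ := List.mem_map.mp hc
      exact hGood r
    have hLSPair : LS.Pairwise (fun c c' => _root_.Disjoint c.support c'.support) := by
      rw [hLSdef, List.pairwise_map]
      refine List.Pairwise.imp ?_ S.nodup_toList
      intro r r' hne
      exact hdisjσ r r' hne
    have hMSGood : ∀ d ∈ MS, d.IsCycle ∧ d.support.card = p := by
      intro d hd
      obtain ⟨r, _, rfl⟩ := Finset.mem_image.mp hd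
      exact hGood r
    have hMSPair : ((MS : Set (Equiv.Perm (Fin (k * p))))).Pairwise
        (fun d d' => _root_.Disjoint d.support d'.support) := by
      intro x hx y hy hxy
      obtain ⟨r, _, rfl⟩ := Finset.mem_image.mp (Finset.mem_coe.mp hx)
      obtain ⟨r', _, rfl⟩ := Finset.mem_image.mp (Finset.mem_coe.mp hy)
      have : r ≠ r' := by rintro rfl; exact hxy rfl
      exact hdisjσ r r' this
    have hMScard : MS.card = k := by
      rw [hMSdef, Finset.card_image_of_injective _ hσinj, Finset.card_univ, Fintype.card_fin]
    have hmain := DGI6.main_count hp i (Fin (k * p)) (Fin (k * p)) LS MS hLSlen hLSGood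
      hLSPair hMSGood hMSPair rfl
    rw [← DGI7.natcard_setOf, Set.coe_setOf]
    have hiff : ∀ π : Equiv.Perm (Fin (k * p)), (S ⊆ F π) ↔
        (∀ c ∈ LS, ∃ d ∈ MS, π.permCongr c ∈ Subgroup.zpowers d) := by
      intro π
      constructor
      · intro hsub c hc
        obtain ⟨r, hr, rfl⟩ := List.mem_map.mp hc
        have hrS : r ∈ S := Finset.mem_toList.mp hr
        have := hsub hrS
        rw [hFdef] at this
        simp only [Finset.mem_filter, Finset.mem_univ, true_and] at this
        obtain ⟨s, hs⟩ := this
        refine ⟨σ s, Finset.mem_image_of_mem σ (Finset.mem_univ s), ?_⟩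
        rw [Equiv.permCongr_eq_mul]
        exact hs
      · intro hall r hrS
        have hc : σ r ∈ LS := by
          rw [hLSdef]
          exact List.mem_map_of_mem (f := σ) (Finset.mem_toList.mpr hrS)
        obtain ⟨d, hd, hzd⟩ := hall (σ r) hc
        obtain ⟨s, _, rfl⟩ := Finset.mem_image.mp hd
        rw [hFdef]
        simp only [Finset.mem_filter, Finset.mem_univ, true_and]
        refine ⟨s, ?_⟩
        rw [← Equiv.permCongr_eq_mul]
        exact hzd
    rw [Nat.card_congr (Equiv.subtypeEquivRight hiff)]
    rw [show {π : Equiv.Perm (Fin (k * p)) //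
        ∀ c ∈ LS, ∃ d ∈ MS, π.permCongr c ∈ Subgroup.zpowers d}
      = {e : Fin (k * p) ≃ Fin (k * p) //
        ∀ c ∈ LS, ∃ d ∈ MS, e.permCongr c ∈ Subgroup.zpowers d} from rfl]
    rw [hmain, hMScard, Fintype.card_fin]
  rw [hstep1, hstep2, Finset.sum_congr rfl hstep3, Finset.sum_const, smul_eq_mul,
    Finset.card_powersetCard, Finset.card_univ, Fintype.card_fin]
  rw [Nat.descFactorial_eq_factorial_mul_choose, ← Nat.sub_mul]
  ring
end

section
/- Let p ≥ 3 be a prime, 1 ≤ k ≤ p−1, and n = kp. The number n_{2k} of (P,P)-double cosets of S_n of maximal size p^{2k} (P a Sylow p-subgroup of order pᵏ) satisfies ((kp)!/p^{2k})·(1 − 1/(p−2)!) ≤ n_{2k} ≤ (kp)!/p^{2k}. -/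
namespace MaxDoset

open Finset


lemma two_pow_le_factorial (i : ℕ) : 2 ^ (i - 1) ≤ i.factorial := by
  induction i with
  | zero => simp
  | succ n ih =>
    rcases Nat.eq_or_lt_of_le (Nat.zero_le n) with h | h
    · simp [← h]
    · have h1 : n + 1 - 1 = (n - 1) + 1 := by omega
      rw [h1, pow_succ, Nat.factorial_succ, mul_comm (n+1)]
      exact Nat.mul_le_mul ih (by omega)

lemma bin {n m : ℕ} (h : n ≤ m) : (m + 1) ^ n ≤ 3 * m ^ n := by
  rcases Nat.eq_zero_or_pos n with rfl | hn
  · simp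
  have hm : 1 ≤ m := le_trans hn h
  have hbin : (m + 1) ^ n = ∑ k ∈ range (n + 1), m ^ k * 1 ^ (n - k) * n.choose k :=
    add_pow m 1 n
  rw [Finset.sum_range_succ] at hbin
  simp only [one_pow, mul_one] at hbin
  rw [Nat.choose_self, mul_one] at hbin
  -- key termwise bound
  have key : ∀ k ∈ range n, (m ^ k * n.choose k : ℚ) ≤ (m ^ n : ℚ) * (1/2) ^ (n - 1 - k) := by
    intro k hk
    rw [Finset.mem_range] at hk
    have hnat : m ^ k * n.choose k * 2 ^ (n - k - 1) ≤ m ^ n := by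
      have h1 : n.choose k * 2 ^ (n - k - 1) ≤ m ^ (n - k) := by
        have h2 : n.choose k = n.choose (n - k) := (Nat.choose_symm hk.le).symm
        have h3 : n.choose (n - k) * 2 ^ (n - k - 1) ≤ n.choose (n - k) * (n - k).factorial :=
          Nat.mul_le_mul_left _ (two_pow_le_factorial _)
        have h4 : n.choose (n - k) * (n - k).factorial ≤ n ^ (n - k) := by
          rw [mul_comm, ← Nat.descFactorial_eq_factorial_mul_choose]
          exact Nat.descFactorial_le_pow _ _
        calc n.choose k * 2 ^ (n - k - 1) = n.choose (n-k) * 2 ^ (n-k-1) := by rw [h2]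
          _ ≤ n ^ (n - k) := le_trans h3 h4
          _ ≤ m ^ (n - k) := Nat.pow_le_pow_left h _
      calc m ^ k * n.choose k * 2 ^ (n - k - 1) = m ^ k * (n.choose k * 2 ^ (n - k - 1)) := by ring
        _ ≤ m ^ k * m ^ (n - k) := Nat.mul_le_mul_left _ h1
        _ = m ^ n := by rw [← pow_add]; congr 1; omega
    have h2 : ((m:ℚ)) ^ k * (n.choose k : ℚ) * 2 ^ (n - k - 1) ≤ ((m:ℚ)) ^ n := by
      exact_mod_cast hnat
    have hpos : (0:ℚ) < 2 ^ (n - k - 1) := by positivity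
    calc ((m:ℚ) ^ k * n.choose k : ℚ) ≤ (m:ℚ) ^ n / 2 ^ (n - k - 1) := (le_div_iff₀ hpos).2 h2
      _ = ((m:ℚ)) ^ n * (1/2) ^ (n - 1 - k) := by
          have he : n - 1 - k = n - k - 1 := by omega
          rw [he, one_div, inv_pow, div_eq_mul_inv]
  have hsum : (∑ k ∈ range n, (m ^ k * n.choose k : ℚ)) ≤ 2 * (m ^ n : ℚ) := by
    calc (∑ k ∈ range n, (m ^ k * n.choose k : ℚ))
        ≤ ∑ k ∈ range n, (m ^ n : ℚ) * (1/2) ^ (n - 1 - k) := Finset.sum_le_sum key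
      _ = (m ^ n : ℚ) * ∑ k ∈ range n, (1/2 : ℚ) ^ (n - 1 - k) := by rw [Finset.mul_sum]
      _ = (m ^ n : ℚ) * ∑ k ∈ range n, (1/2 : ℚ) ^ k := by
          congr 1
          rw [← Finset.sum_range_reflect]
          apply Finset.sum_congr rfl
          intro k hk
          rw [Finset.mem_range] at hk
          congr 1
          omega
      _ ≤ (m ^ n : ℚ) * 2 := by
          have : ∑ k ∈ range n, (1/2 : ℚ) ^ k ≤ 2 := by
            have := geom_sum_eq (by norm_num : (1/2 : ℚ) ≠ 1) n
            rw [this]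
            have h2 : (0:ℚ) ≤ (1/2)^n := by positivity
            rw [div_eq_mul_inv]
            norm_num
            linarith
          have hpos : (0:ℚ) ≤ (m ^ n : ℚ) := by positivity
          nlinarith
      _ = 2 * (m ^ n : ℚ) := by ring
  have : ((∑ k ∈ range n, m ^ k * n.choose k : ℕ) : ℚ) ≤ 2 * (m ^ n : ℚ) := by
    push_cast
    exact_mod_cast hsum
  have hnatsum : (∑ k ∈ range n, m ^ k * n.choose k) ≤ 2 * m ^ n := by exact_mod_cast this
  omega

lemma pow_swap {a b : ℕ} (ha : 3 ≤ a) (hab : a ≤ b) : b ^ a ≤ a ^ b := by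
  induction b, hab using Nat.le_induction with
  | base => exact le_refl _
  | succ b hb ih =>
    calc (b + 1) ^ a ≤ 3 * b ^ a := bin hb
      _ ≤ a * a ^ b := Nat.mul_le_mul ha ih
      _ = a ^ (b + 1) := by rw [pow_succ, mul_comm]

lemma sq_le_two_pow {n : ℕ} (h : 5 ≤ n) : n ^ 2 ≤ 2 ^ n := by
  induction n, h using Nat.le_induction with
  | base => norm_num
  | succ n hn ih =>
    have : (n + 1) ^ 2 ≤ 2 * n ^ 2 := by nlinarith
    calc (n + 1) ^ 2 ≤ 2 * n ^ 2 := this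
      _ ≤ 2 * 2 ^ n := Nat.mul_le_mul_left _ ih
      _ = 2 ^ (n + 1) := by rw [pow_succ, mul_comm]

lemma fact_add_ge (n c : ℕ) : n.factorial * (n + 1) ^ c ≤ (n + c).factorial := by
  rw [← Nat.factorial_mul_ascFactorial]
  exact Nat.mul_le_mul_left _ (Nat.pow_succ_le_ascFactorial _ _)

/-- `p! = p * ((p-1) * (p-2)!)` for `2 ≤ p` -/
lemma fact_split {p : ℕ} (hp : 2 ≤ p) :
    p.factorial = p * ((p - 1) * (p - 2).factorial) := by
  obtain ⟨q, rfl⟩ : ∃ q, p = q + 2 := ⟨p - 2, by omega⟩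
  have h1 : q + 2 - 1 = q + 1 := by omega
  have h2 : q + 2 - 2 = q := by omega
  rw [h1, h2, Nat.factorial_succ, Nat.factorial_succ]


/-- (M): `3*m*((p-1)*(p*((m-1)*p)!)) ≤ (m*p)!` for `p ≥ 5`, `1 ≤ m ≤ p` -/
lemma lemM {p m : ℕ} (hp5 : 5 ≤ p) (hm : 1 ≤ m) (hmp : m ≤ p) :
    3 * m * ((p - 1) * (p * ((m - 1) * p).factorial)) ≤ (m * p).factorial := by
  rcases Nat.lt_or_ge m 2 with h2 | h2
  · -- m = 1
    have hm1 : m = 1 := by omega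
    subst hm1
    simp only [Nat.sub_self, Nat.zero_mul, Nat.factorial_zero, mul_one, one_mul]
    rw [fact_split (by omega)]
    have h3 : 3 ≤ (p - 2).factorial := by
      calc 3 ≤ Nat.factorial 3 := by decide
        _ ≤ (p - 2).factorial := Nat.factorial_le (by omega)
    calc 3 * ((p - 1) * p) = (p - 1) * p * 3 := by ring
      _ ≤ (p - 1) * p * (p - 2).factorial := Nat.mul_le_mul_left _ h3
      _ = p * ((p - 1) * (p - 2).factorial) := by ring
  · -- m ≥ 2
    have key : 3 * m * ((p - 1) * p) ≤ ((m - 1) * p + 1) ^ p := by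
      calc 3 * m * ((p - 1) * p) ≤ 3 * p * (p * p) :=
            Nat.mul_le_mul (Nat.mul_le_mul_left _ hmp)
              (Nat.mul_le_mul_right _ (by omega))
        _ ≤ (p * p) * (p * (p * p)) := by
            have : 3 * p ≤ p * p * p := by nlinarith
            calc 3 * p * (p * p) ≤ p * p * p * (p * p) := Nat.mul_le_mul_right _ this
              _ = p * p * (p * (p * p)) := by ring
        _ = p ^ 5 := by ring
        _ ≤ p ^ p := Nat.pow_le_pow_right (by omega) hp5
        _ ≤ ((m - 1) * p + 1) ^ p := by
            apply Nat.pow_le_pow_left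
            have : 1 * p ≤ (m - 1) * p := Nat.mul_le_mul_right _ (by omega)
            omega
    have hsplit : m * p = (m - 1) * p + p := by
      have : m = (m - 1) + 1 := by omega
      calc m * p = ((m - 1) + 1) * p := by rw [← this]
        _ = (m - 1) * p + p := by ring
    rw [hsplit]
    calc 3 * m * ((p - 1) * (p * ((m - 1) * p).factorial))
        = ((m - 1) * p).factorial * (3 * m * ((p - 1) * p)) := by ring
      _ ≤ ((m - 1) * p).factorial * ((m - 1) * p + 1) ^ p :=
          Nat.mul_le_mul_left _ key
      _ ≤ ((m - 1) * p + p).factorial := fact_add_ge _ _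

/-- the quantity `h(j) = C(k,j) (p-1)^j (jp)^j ((k-j)p)!` -/
def hfun (p k j : ℕ) : ℕ :=
  k.choose j * ((p - 1) ^ j * ((j * p) ^ j * ((k - j) * p).factorial))

lemma hfun_mono {p k j : ℕ} (hp5 : 5 ≤ p) (hj : 1 ≤ j) (hjk : j + 1 ≤ k)
    (hk : k ≤ p - 1) : hfun p k (j + 1) ≤ hfun p k j := by
  have hch : k.choose (j + 1) * (j + 1) = k.choose j * (k - j) :=
    Nat.choose_succ_right_eq k j
  have h1 : (j + 1) ^ (j + 1) ≤ (j + 1) * (3 * j ^ j) := by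
    rw [pow_succ, mul_comm ((j+1)^j)]
    exact Nat.mul_le_mul_left _ (bin (le_refl j))
  have h2 : 3 * (k - j) * ((p - 1) * (p * ((k - j - 1) * p).factorial))
      ≤ ((k - j) * p).factorial := lemM hp5 (by omega) (by omega)
  have hkj : k - (j + 1) = k - j - 1 := by omega
  have key : (j + 1) * hfun p k (j + 1) ≤ (j + 1) * hfun p k j := by
    calc (j + 1) * hfun p k (j + 1)
        = (k.choose (j + 1) * (j + 1)) *
            ((p - 1) ^ (j + 1) * (((j + 1) * p) ^ (j + 1) * ((k - (j+1)) * p).factorial)) := by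
          unfold hfun; ring
      _ = (k.choose j * (k - j)) *
            ((p - 1) ^ (j + 1) * (((j + 1) * p) ^ (j + 1) * ((k - j - 1) * p).factorial)) := by
          rw [hch, hkj]
      _ = (j + 1) ^ (j + 1) *
            (k.choose j * ((p - 1) ^ j * (p ^ j *
              ((k - j) * ((p - 1) * (p * ((k - j - 1) * p).factorial)))))) := by
          rw [mul_pow]
          ring
      _ ≤ ((j + 1) * (3 * j ^ j)) *
            (k.choose j * ((p - 1) ^ j * (p ^ j *
              ((k - j) * ((p - 1) * (p * ((k - j - 1) * p).factorial)))))) :=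
          Nat.mul_le_mul_right _ h1
      _ = (j + 1) * (k.choose j * ((p - 1) ^ j * ((j ^ j * p ^ j) *
            (3 * (k - j) * ((p - 1) * (p * ((k - j - 1) * p).factorial)))))) := by
          ring
      _ ≤ (j + 1) * (k.choose j * ((p - 1) ^ j * ((j ^ j * p ^ j) *
            ((k - j) * p).factorial))) := by
          apply Nat.mul_le_mul_left
          apply Nat.mul_le_mul_left
          apply Nat.mul_le_mul_left
          exact Nat.mul_le_mul_left _ h2
      _ = (j + 1) * hfun p k j := by
          unfold hfun
          rw [mul_pow]
  exact Nat.le_of_mul_le_mul_left key (by omega)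

lemma hfun_le_one {p k j : ℕ} (hp5 : 5 ≤ p) (hj : 1 ≤ j) (hjk : j ≤ k)
    (hk : k ≤ p - 1) : hfun p k j ≤ hfun p k 1 := by
  induction j, hj using Nat.le_induction with
  | base => exact le_refl _
  | succ j hj ih =>
    exact le_trans (hfun_mono hp5 hj hjk hk) (ih (by omega))

lemma asc_ge {p k t : ℕ} (ht : t ≤ p) :
    (k + 1) ^ t * t.factorial ≤ (k * p + 1).ascFactorial t := by
  induction t with
  | zero => simp
  | succ t ih =>
    have ih' := ih (by omega)
    rw [Nat.ascFactorial_succ]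
    have hstep : (k + 1) * (t + 1) ≤ k * p + 1 + t := by
      have : k * (t + 1) ≤ k * p := Nat.mul_le_mul_left _ (by omega)
      nlinarith
    calc (k + 1) ^ (t + 1) * (t + 1).factorial
        = ((k + 1) * (t + 1)) * ((k + 1) ^ t * t.factorial) := by
          rw [pow_succ, Nat.factorial_succ]; ring
      _ ≤ (k * p + 1 + t) * ((k * p + 1).ascFactorial t) :=
          Nat.mul_le_mul hstep ih'
      _ = (k * p + 1 + t) * (k * p + 1).ascFactorial t := rfl

/-- (IV): `(p^k - 1) * k * p * ((p-2)! * ((k-1)p)!) ≤ (kp)!` -/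
lemma lemIV {p k : ℕ} (hp5 : 5 ≤ p) (hk1 : 1 ≤ k) (hk2 : k ≤ p - 1) :
    (p ^ k - 1) * k * p * ((p - 2).factorial * ((k - 1) * p).factorial)
      ≤ (k * p).factorial := by
  induction k with
  | zero => omega
  | succ k ih =>
    rcases Nat.eq_zero_or_pos k with rfl | hk
    · -- base case k = 1
      simp only [zero_add, pow_one, Nat.sub_self, Nat.zero_mul, Nat.factorial_zero,
        mul_one, one_mul]
      rw [fact_split (by omega : 2 ≤ p)]
      calc (p - 1) * p * (p - 2).factorial = p * ((p - 1) * (p - 2).factorial) := by ring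
        _ ≤ p * ((p - 1) * (p - 2).factorial) := le_refl _
    · -- inductive-free step: k ≥ 1, k+1 ≤ p - 1
      clear ih
      have hkp : k + 2 ≤ p := by omega
      have hmain : p ^ (k + 1) * (k + 1) ≤ (k + 1) ^ p * (p - 1) := by
        rcases Nat.lt_or_ge k 2 with hk2' | hk2'
        · -- k = 1
          have hk1' : k = 1 := by omega
          subst hk1'
          have h1 : p ^ 2 ≤ 2 ^ p := sq_le_two_pow hp5
          calc p ^ 2 * 2 = 2 * p ^ 2 := by ring
            _ ≤ 2 * 2 ^ p := Nat.mul_le_mul_left _ h1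
            _ ≤ (p - 1) * 2 ^ p := Nat.mul_le_mul_right _ (by omega)
            _ = 2 ^ p * (p - 1) := by ring
        · -- k ≥ 2, so a := k+1 ≥ 3
          have h1 : p ^ (k + 1) ≤ (k + 1) ^ p := pow_swap (by omega) (by omega)
          calc p ^ (k + 1) * (k + 1) ≤ (k + 1) ^ p * (k + 1) :=
                Nat.mul_le_mul_right _ h1
            _ ≤ (k + 1) ^ p * (p - 1) := Nat.mul_le_mul_left _ (by omega)
      -- now assemble
      have hfacsplit : ((k + 1) * p).factorial
          = (k * p).factorial * (k * p + 1).ascFactorial p := by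
        rw [Nat.factorial_mul_ascFactorial]
        congr 1
        ring
      have hasc : (k + 1) ^ p * p.factorial ≤ (k * p + 1).ascFactorial p :=
        asc_ge (le_refl p)
      have hsuff : (p ^ (k + 1) - 1) * (k + 1) * p * (p - 2).factorial
          ≤ (k + 1) ^ p * p.factorial := by
        rw [fact_split (by omega : 2 ≤ p)]
        calc (p ^ (k + 1) - 1) * (k + 1) * p * (p - 2).factorial
            ≤ p ^ (k + 1) * (k + 1) * p * (p - 2).factorial := by
              apply Nat.mul_le_mul_right
              apply Nat.mul_le_mul_right
              apply Nat.mul_le_mul_right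
              omega
          _ ≤ ((k + 1) ^ p * (p - 1)) * p * (p - 2).factorial := by
              apply Nat.mul_le_mul_right
              apply Nat.mul_le_mul_right
              exact hmain
          _ = (k + 1) ^ p * (p * ((p - 1) * (p - 2).factorial)) := by ring
      have hsimp : (k + 1) - 1 = k := by omega
      rw [hsimp, hfacsplit]
      calc (p ^ (k + 1) - 1) * (k + 1) * p * ((p - 2).factorial * (k * p).factorial)
          = ((p ^ (k + 1) - 1) * (k + 1) * p * (p - 2).factorial) * (k * p).factorial := by
            ring
        _ ≤ ((k + 1) ^ p * p.factorial) * (k * p).factorial :=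
            Nat.mul_le_mul_right _ hsuff
        _ ≤ ((k * p + 1).ascFactorial p) * (k * p).factorial :=
            Nat.mul_le_mul_right _ hasc
        _ = (k * p).factorial * (k * p + 1).ascFactorial p := by ring


open MulAction


variable {G : Type*} [Group G]

/-- the subgroup of elements `u ∈ H` with `x * u * x⁻¹ ∈ H` -/
def Ix (H : Subgroup G) (x : G) : Subgroup G :=
  H ⊓ H.comap (MulAut.conj x).toMonoidHom

lemma mem_Ix {H : Subgroup G} {x u : G} :
    u ∈ Ix H x ↔ u ∈ H ∧ x * u * x⁻¹ ∈ H := by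
  simp [Ix, Subgroup.mem_comap, MulAut.conj_apply]

lemma doset_card_mul_card_Ix [Fintype G] (H : Subgroup G) (x : G) :
    Nat.card (DoubleCoset.doubleCoset x (H : Set G) (H : Set G)) * Nat.card (Ix H x)
      = Nat.card H * Nat.card H := by
  classical
  letI act : MulAction (↥H × ↥H) G :=
    { smul := fun ab g => ab.1.1 * g * (ab.2.1)⁻¹
      one_smul := by
        intro g
        show (1 : G) * g * (1 : G)⁻¹ = g
        group
      mul_smul := by
        rintro ⟨a, b⟩ ⟨c, d⟩ g
        show (a.1 * c.1) * g * (b.1 * d.1)⁻¹ = a.1 * (c.1 * g * d.1⁻¹) * b.1⁻¹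
        group }
  have hsmul : ∀ (ab : ↥H × ↥H) (g : G), ab • g = ab.1.1 * g * (ab.2.1)⁻¹ :=
    fun _ _ => rfl
  have horb : orbit (↥H × ↥H) x = DoubleCoset.doubleCoset x (H : Set G) (H : Set G) := by
    ext y
    constructor
    · rintro ⟨⟨a, b⟩, hy⟩
      change (a, b) • x = y at hy
      rw [hsmul] at hy
      exact DoubleCoset.mem_doubleCoset.2 ⟨a.1, a.2, (b.1)⁻¹, H.inv_mem b.2, hy.symm⟩
    · intro hy
      obtain ⟨a, ha, c, hc, rfl⟩ := DoubleCoset.mem_doubleCoset.1 hy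
      refine ⟨(⟨a, ha⟩, ⟨c⁻¹, H.inv_mem hc⟩), ?_⟩
      show (((⟨a, ha⟩, ⟨c⁻¹, H.inv_mem hc⟩) : ↥H × ↥H)) • x = a * x * c
      rw [hsmul]
      simp
  have hstab : Nat.card (stabilizer (↥H × ↥H) x) = Nat.card (Ix H x) := by
    have stab_iff : ∀ (a b : ↥H), (a, b) ∈ stabilizer (↥H × ↥H) x ↔
        a.1 * x * (b.1)⁻¹ = x := by
      intro a b
      rw [mem_stabilizer_iff, hsmul]
    have fwd_mem : ∀ s : stabilizer (↥H × ↥H) x, (s.1.2.1 : G) ∈ Ix H x := by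
      rintro ⟨⟨a, b⟩, hs⟩
      have hs' : a.1 * x * (b.1)⁻¹ = x := (stab_iff a b).1 hs
      rw [mem_Ix]
      refine ⟨b.2, ?_⟩
      have h1 : a.1 * x = x * b.1 := (mul_inv_eq_iff_eq_mul).1 hs'
      have h2 : x * b.1 * x⁻¹ = a.1 := by
        rw [← h1]
        exact mul_inv_cancel_right _ _
      rw [h2]
      exact a.2
    have bwd_mem : ∀ u : Ix H x,
        ((⟨x * u.1 * x⁻¹, (mem_Ix.1 u.2).2⟩, ⟨u.1, (mem_Ix.1 u.2).1⟩) : ↥H × ↥H)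
          ∈ stabilizer (↥H × ↥H) x := by
      intro u
      rw [stab_iff]
      show (x * u.1 * x⁻¹) * x * (u.1)⁻¹ = x
      group
    apply Nat.card_congr
    refine ⟨fun s => ⟨s.1.2.1, fwd_mem s⟩,
      fun u => ⟨(⟨x * u.1 * x⁻¹, (mem_Ix.1 u.2).2⟩, ⟨u.1, (mem_Ix.1 u.2).1⟩), bwd_mem u⟩,
      ?_, ?_⟩
    · rintro ⟨⟨a, b⟩, hs⟩
      have hs' : a.1 * x * (b.1)⁻¹ = x := (stab_iff a b).1 hs
      have h1 : a.1 * x = x * b.1 := (mul_inv_eq_iff_eq_mul).1 hs'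
      have h2 : x * b.1 * x⁻¹ = a.1 := by
        rw [← h1]
        exact mul_inv_cancel_right _ _
      apply Subtype.ext
      apply Prod.ext
      · exact Subtype.ext h2
      · rfl
    · intro u
      rfl
  have := card_orbit_mul_card_stabilizer_eq_card_group (↥H × ↥H) x
  rw [Fintype.card_prod] at this
  have h1 : Nat.card (orbit (↥H × ↥H) x) = Nat.card (DoubleCoset.doubleCoset x (H : Set G) (H : Set G)) := by
    rw [horb]
  rw [← h1, ← hstab]
  simp only [Nat.card_eq_fintype_card]
  exact this


open Equiv Equiv.Perm Finset


variable {n p k : ℕ}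

/-- Every nontrivial element of a subgroup of order `p^k` of `Perm (Fin (k*p))`
(with `k ≤ p-1`) has cycle type `replicate j p` with `1 ≤ j ≤ k`. -/
lemma cycleType_of_mem {p k : ℕ} (hp : p.Prime) (hk2 : k ≤ p - 1)
    {H : Subgroup (Equiv.Perm (Fin (k * p)))} (hH : Nat.card H = p ^ k)
    {v : Equiv.Perm (Fin (k * p))} (hv : v ∈ H) (hv1 : v ≠ 1) :
    v.cycleType = Multiset.replicate v.cycleType.card p ∧
      1 ≤ v.cycleType.card ∧ v.cycleType.card ≤ k := by
  have hp2 := hp.two_le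
  have hord : orderOf v ∣ p ^ k := by
    have h2 : orderOf (⟨v, hv⟩ : H) ∣ Nat.card H := orderOf_dvd_natCard _
    rw [hH] at h2
    have h1 : orderOf (H.subtype ⟨v, hv⟩) = orderOf (⟨v, hv⟩ : H) :=
      orderOf_injective H.subtype Subtype.coe_injective _
    have h1' : orderOf v = orderOf (⟨v, hv⟩ : H) := h1
    rw [h1']
    exact h2
  have hkp : k * p < p ^ 2 := by
    have h1 : k * p ≤ (p - 1) * p := Nat.mul_le_mul_right _ hk2
    have h2 : (p - 1) * p < p * p := (Nat.mul_lt_mul_right (by omega : 0 < p)).2 (by omega)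
    have h3 : p * p = p ^ 2 := by ring
    omega
  have hall : ∀ ℓ ∈ v.cycleType, ℓ = p := by
    intro ℓ hℓ
    have h2ℓ : 2 ≤ ℓ := Equiv.Perm.two_le_of_mem_cycleType hℓ
    have hdvd : ℓ ∣ p ^ k := by
      have : ℓ ∣ v.cycleType.lcm := Multiset.dvd_lcm hℓ
      rw [Equiv.Perm.lcm_cycleType] at this
      exact this.trans hord
    obtain ⟨i, hik, rfl⟩ := (Nat.dvd_prime_pow hp).1 hdvd
    have hle : p ^ i ≤ k * p := by
      have h1 : p ^ i ≤ v.cycleType.sum :=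
        Multiset.single_le_sum (fun x _ => Nat.zero_le x) _ hℓ
      rw [Equiv.Perm.sum_cycleType] at h1
      calc p ^ i ≤ v.support.card := h1
        _ ≤ Fintype.card (Fin (k * p)) := v.support.card_le_univ
        _ = k * p := Fintype.card_fin _
    have hi : i < 2 := by
      by_contra hcon
      push_neg at hcon
      have : p ^ 2 ≤ p ^ i := Nat.pow_le_pow_right (by omega) hcon
      omega
    interval_cases i
    · rw [pow_zero] at h2ℓ
      omega
    · rw [pow_one]
  have hrep : v.cycleType = Multiset.replicate v.cycleType.card p :=
    Multiset.eq_replicate.2 ⟨rfl, hall⟩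
  refine ⟨hrep, ?_, ?_⟩
  · rw [Nat.one_le_iff_ne_zero]
    intro hcon
    exact hv1 (Equiv.Perm.cycleType_eq_zero.1 (Multiset.card_eq_zero.1 hcon))
  · have hsum : v.cycleType.card * p = v.support.card := by
      conv_lhs => rw [← smul_eq_mul, ← Multiset.sum_replicate, ← hrep]
      exact Equiv.Perm.sum_cycleType v
    have h1 : v.support.card ≤ k * p := by
      calc v.support.card ≤ Fintype.card (Fin (k * p)) := v.support.card_le_univ
        _ = k * p := Fintype.card_fin _
    have hple : v.cycleType.card * p ≤ k * p := by omega
    exact Nat.le_of_mul_le_mul_right hple (by omega)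

/-- Centralizer bound for an element with cycle type `replicate j p`. -/
lemma centralizer_card_le {p k j : ℕ} (hp1 : 1 ≤ p) (hj : 1 ≤ j) (hjk : j ≤ k)
    {u : Equiv.Perm (Fin (k * p))} (hu : u.cycleType = Multiset.replicate j p) :
    (Finset.univ.filter (fun c : Equiv.Perm (Fin (k * p)) => c * u = u * c)).card
      ≤ (j * p) ^ j * ((k - j) * p).factorial := by
  classical
  set s : Finset (Fin (k * p)) := u.support with hs_def
  have hscard : s.card = j * p := by
    have h1 : u.cycleType.sum = s.card := Equiv.Perm.sum_cycleType u
    rw [hu, Multiset.sum_replicate, smul_eq_mul] at h1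
    omega
  -- the transversal of minima of cycles
  set T : Finset (Fin (k * p)) :=
    s.filter (fun a => ∀ b ∈ s, u.SameCycle a b → a ≤ b) with hT_def
  have hTcard : T.card ≤ j := by
    have hjcard : u.cycleFactorsFinset.card = j := by
      have h1 : u.cycleType = u.cycleFactorsFinset.val.map (Finset.card ∘ support) :=
        Equiv.Perm.cycleType_def u
      have h2 : Multiset.card u.cycleType = j := by rw [hu, Multiset.card_replicate]
      rw [h1, Multiset.card_map] at h2
      exact h2
    rw [← hjcard]
    apply Finset.card_le_card_of_injOn (fun a => u.cycleOf a)
    · intro a ha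
      simp only [Finset.mem_coe, Finset.coe_filter, Set.mem_setOf_eq, hT_def, Finset.mem_filter] at ha
      exact Equiv.Perm.cycleOf_mem_cycleFactorsFinset_iff.2 ha.1
    · intro a ha b hb heq
      have heq' : u.cycleOf a = u.cycleOf b := heq
      simp only [Finset.coe_filter, Set.mem_setOf_eq, hT_def] at ha hb
      have hsc : u.SameCycle a b := by
        have hbmem : b ∈ (u.cycleOf b).support :=
          Equiv.Perm.mem_support_cycleOf_iff.2 ⟨Equiv.Perm.SameCycle.refl _ _, hb.1⟩
        rw [← heq'] at hbmem
        exact (Equiv.Perm.mem_support_cycleOf_iff.1 hbmem).1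
      exact le_antisymm (ha.2 b hb.1 hsc) (hb.2 a ha.1 hsc.symm)
  -- every point of the support is on the cycle of some element of T
  have htrans : ∀ a ∈ s, ∃ t ∈ T, u.SameCycle t a := by
    intro a ha
    set M : Finset (Fin (k * p)) := s.filter (fun b => u.SameCycle a b) with hM_def
    have hane : a ∈ M := by
      rw [hM_def, Finset.mem_filter]
      exact ⟨ha, Equiv.Perm.SameCycle.refl _ _⟩
    have hMne : M.Nonempty := ⟨a, hane⟩
    set t := M.min' hMne with ht_def
    have htM : t ∈ M := M.min'_mem hMne
    rw [hM_def, Finset.mem_filter] at htM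
    refine ⟨t, ?_, htM.2.symm⟩
    rw [hT_def, Finset.mem_filter]
    refine ⟨htM.1, ?_⟩
    intro b hb hsc
    apply M.min'_le
    rw [hM_def, Finset.mem_filter]
    exact ⟨hb, htM.2.trans hsc⟩
  -- centralizer elements map s to s and complement to complement
  have hmaps : ∀ c : Equiv.Perm (Fin (k * p)), c * u = u * c →
      ∀ a, (a ∈ s ↔ c a ∈ s) := by
    intro c hc a
    have key : ∀ x, u (c x) = c (u x) := by
      intro x
      have : (u * c) x = (c * u) x := by rw [hc]
      simpa [Equiv.Perm.mul_apply] using this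
    constructor
    · intro haa
      rw [hs_def, Equiv.Perm.mem_support] at haa ⊢
      intro hcon
      rw [key] at hcon
      exact haa (c.injective hcon)
    · intro haa
      rw [hs_def, Equiv.Perm.mem_support] at haa ⊢
      intro hcon
      apply haa
      rw [key, hcon]
  -- injection into (T → s) × (complement ↪ complement)
  have hinj : (Finset.univ.filter (fun c : Equiv.Perm (Fin (k * p)) => c * u = u * c)).card
      ≤ Fintype.card ((↥T → ↥s) × (↥(Finset.univ \ s) ↪ ↥(Finset.univ \ s))) := by
    rw [← Fintype.card_coe (Finset.univ.filter _)]
    apply Fintype.card_le_of_injective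
      (fun c => (fun t => ⟨c.1 t.1, by
          have hc := (Finset.mem_filter.1 c.2).2
          exact (hmaps c.1 hc t.1).1 (Finset.mem_filter.1 t.2).1⟩,
        ⟨fun b => ⟨c.1 b.1, by
          have hc := (Finset.mem_filter.1 c.2).2
          have hb := b.2
          rw [Finset.mem_sdiff] at hb ⊢
          refine ⟨Finset.mem_univ _, ?_⟩
          intro hcon
          exact hb.2 ((hmaps c.1 hc b.1).2 hcon)⟩, by
          intro x y hxy
          apply Subtype.ext
          exact c.1.injective (congrArg Subtype.val hxy)⟩))
    intro c d hcd
    have hc := (Finset.mem_filter.1 c.2).2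
    have hd := (Finset.mem_filter.1 d.2).2
    have h1 := (Prod.ext_iff.1 hcd).1
    have h2 := (Prod.ext_iff.1 hcd).2
    simp only at h1 h2
    have happ : ∀ (σ : Equiv.Perm (Fin (k * p))) (i : ℤ) (t : Fin (k * p)),
        σ * u = u * σ → σ ((u ^ i) t) = (u ^ i) (σ t) := by
      intro σ i t h
      have hcu : Commute σ u := h
      have hzi : σ * u ^ i = u ^ i * σ := (hcu.zpow_right i)
      have : (σ * u ^ i) t = (u ^ i * σ) t := by rw [hzi]
      simpa [Equiv.Perm.mul_apply] using this
    apply Subtype.ext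
    apply Equiv.ext
    intro x
    by_cases hx : x ∈ s
    · obtain ⟨t, htT, i, hi⟩ := htrans x hx
      have hct : c.1 t = d.1 t := by
        have := congrFun h1 ⟨t, htT⟩
        exact congrArg Subtype.val this
      calc c.1 x = c.1 ((u ^ i) t) := by rw [hi]
        _ = (u ^ i) (c.1 t) := happ c.1 i t hc
        _ = (u ^ i) (d.1 t) := by rw [hct]
        _ = d.1 ((u ^ i) t) := (happ d.1 i t hd).symm
        _ = d.1 x := by rw [hi]
    · have hxmem : x ∈ Finset.univ \ s := Finset.mem_sdiff.2 ⟨Finset.mem_univ _, hx⟩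
      have := DFunLike.congr_fun h2 ⟨x, hxmem⟩
      exact congrArg Subtype.val this
  -- compute the cardinality of the target
  have hcompl : (Finset.univ \ s).card = (k - j) * p := by
    rw [Finset.card_sdiff_of_subset (Finset.subset_univ _)]
    rw [Finset.card_univ, Fintype.card_fin, hscard, Nat.sub_mul]
  have hcardX : Fintype.card ((↥T → ↥s) × (↥(Finset.univ \ s) ↪ ↥(Finset.univ \ s)))
      = (j * p) ^ T.card * ((k - j) * p).factorial := by
    rw [Fintype.card_prod, Fintype.card_fun, Fintype.card_embedding_eq]
    rw [Fintype.card_coe, Fintype.card_coe, Fintype.card_coe]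
    rw [hscard, hcompl, Nat.descFactorial_self]
  calc (Finset.univ.filter (fun c : Equiv.Perm (Fin (k * p)) => c * u = u * c)).card
      ≤ Fintype.card ((↥T → ↥s) × (↥(Finset.univ \ s) ↪ ↥(Finset.univ \ s))) := hinj
    _ = (j * p) ^ T.card * ((k - j) * p).factorial := hcardX
    _ ≤ (j * p) ^ j * ((k - j) * p).factorial := by
        apply Nat.mul_le_mul_right
        apply Nat.pow_le_pow_right (by positivity) hTcard


open Equiv Equiv.Perm Finset MulAction


open scoped Classical in
lemma structure_count {p k j : ℕ} (hp : p.Prime) (hk1 : 1 ≤ k) (hk2 : k ≤ p - 1)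
    (hj : 1 ≤ j)
    {H : Subgroup (Equiv.Perm (Fin (k * p)))} (hH : Nat.card H = p ^ k) :
    (Finset.univ.filter (fun v : Equiv.Perm (Fin (k * p)) =>
        v ∈ H ∧ v.cycleType = Multiset.replicate j p)).card
      ≤ k.choose j * (p - 1) ^ j := by
  classical
  have hp2 := hp.two_le
  have hkp2 : k * p < p ^ 2 := by
    have h1 : k * p ≤ (p - 1) * p := Nat.mul_le_mul_right _ hk2
    have h2 : (p - 1) * p < p * p := (Nat.mul_lt_mul_right (by omega : 0 < p)).2 (by omega)
    have h3 : p * p = p ^ 2 := by ring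
    omega
  -- the orbit finsets
  set orbF : Fin (k * p) → Finset (Fin (k * p)) :=
    fun a => Finset.univ.filter (fun b => b ∈ MulAction.orbit ↥H a) with horbF
  have horbF_mem : ∀ a b, b ∈ orbF a ↔ b ∈ MulAction.orbit ↥H a := by
    intro a b
    rw [horbF]
    simp
  have hself : ∀ a, a ∈ orbF a := fun a => (horbF_mem a a).2 (MulAction.mem_orbit_self a)
  have horb_trans : ∀ a b, b ∈ orbF a → orbF b = orbF a := by
    intro a b hb
    have : MulAction.orbit ↥H b = MulAction.orbit ↥H a :=
      MulAction.orbit_eq_iff.2 ((horbF_mem a b).1 hb)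
    rw [horbF]
    simp only [this]
  have hvmem_orb : ∀ (v : Equiv.Perm (Fin (k * p))), v ∈ H → ∀ (i : ℤ) (a : Fin (k * p)),
      (v ^ i) a ∈ orbF a := by
    intro v hv i a
    refine (horbF_mem a _).2 ⟨(⟨v, hv⟩ : ↥H) ^ i, ?_⟩
    show (((⟨v, hv⟩ : ↥H) ^ i : ↥H) : Equiv.Perm (Fin (k * p))) a = (v ^ i) a
    rw [SubgroupClass.coe_zpow]
  have hcard_orb : ∀ a, (orbF a).card = 1 ∨ (orbF a).card = p := by
    intro a
    have hcard : (orbF a).card = Fintype.card {b // b ∈ MulAction.orbit ↥H a} := by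
      rw [horbF]
      exact (Fintype.card_subtype _).symm
    have hdvd : Fintype.card ↑(MulAction.orbit ↥H a) ∣ p ^ k := by
      refine ⟨Fintype.card (MulAction.stabilizer ↥H a), ?_⟩
      have h0 := MulAction.card_orbit_mul_card_stabilizer_eq_card_group ↥H a
      rw [h0, ← Nat.card_eq_fintype_card, hH]
    have hcast : Fintype.card ↑(MulAction.orbit ↥H a)
        = Fintype.card {b // b ∈ MulAction.orbit ↥H a} :=
      Fintype.card_congr (Equiv.refl _)
    rw [hcast, ← hcard] at hdvd
    obtain ⟨i, hik, hi⟩ := (Nat.dvd_prime_pow hp).1 hdvd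
    have hle : (orbF a).card ≤ k * p := by
      calc (orbF a).card ≤ (Finset.univ : Finset (Fin (k * p))).card := Finset.card_le_univ _
        _ = k * p := by rw [Finset.card_univ, Fintype.card_fin]
    have hi2 : i < 2 := by
      by_contra hcon
      push_neg at hcon
      have : p ^ 2 ≤ p ^ i := Nat.pow_le_pow_right (by omega) hcon
      omega
    interval_cases i
    · left; rw [hi, pow_zero]
    · right; rw [hi, pow_one]
  -- key: if v ∈ H moves a, then orbF a is exactly the support of the cycle of v at a
  have hCYC : ∀ (v : Equiv.Perm (Fin (k * p))), v ∈ H → ∀ a, v a ≠ a →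
      (orbF a).card = p ∧ orbF a = (v.cycleOf a).support := by
    intro v hv a hva
    have hv1 : v ≠ 1 := by
      intro hcon
      rw [hcon] at hva
      exact hva rfl
    obtain ⟨hrep, hj1, hjk⟩ := cycleType_of_mem hp hk2 hH hv hv1
    have hasupp : a ∈ v.support := Equiv.Perm.mem_support.2 hva
    have hccard : (v.cycleOf a).support.card = p := by
      have hmem : (v.cycleOf a).support.card ∈ v.cycleType := by
        rw [Equiv.Perm.cycleType_def]
        apply Multiset.mem_map.2
        exact ⟨v.cycleOf a, by
          rw [Finset.mem_val]
          exact Equiv.Perm.cycleOf_mem_cycleFactorsFinset_iff.2 hasupp, rfl⟩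
      rw [hrep] at hmem
      exact Multiset.eq_of_mem_replicate hmem
    have hsub : (v.cycleOf a).support ⊆ orbF a := by
      intro b hb
      obtain ⟨hsc, _⟩ := Equiv.Perm.mem_support_cycleOf_iff.1 hb
      obtain ⟨i, hi⟩ := hsc
      rw [← hi]
      exact hvmem_orb v hv i a
    have hge : p ≤ (orbF a).card := by
      have := Finset.card_le_card hsub
      omega
    have hcard : (orbF a).card = p := by
      rcases hcard_orb a with h | h
      · omega
      · exact h
    refine ⟨hcard, ?_⟩
    exact (Finset.eq_of_subset_of_card_le hsub (by omega)).symm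
  -- all-or-nothing
  have hAON : ∀ (v : Equiv.Perm (Fin (k * p))), v ∈ H → ∀ a, v a ≠ a →
      ∀ b ∈ orbF a, v b ≠ b := by
    intro v hv a hva b hb
    obtain ⟨_, heq⟩ := hCYC v hv a hva
    rw [heq] at hb
    have : b ∈ v.support := Equiv.Perm.support_cycleOf_le v a hb
    exact Equiv.Perm.mem_support.1 this
  -- representatives: minima of size-p orbits
  set R : Finset (Fin (k * p)) :=
    Finset.univ.filter (fun a => (orbF a).card = p ∧ ∀ b ∈ orbF a, a ≤ b) with hR
  have hRmem : ∀ a, a ∈ R ↔ (orbF a).card = p ∧ ∀ b ∈ orbF a, a ≤ b := by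
    intro a
    rw [hR]
    simp
  have hdisj : ∀ r ∈ R, ∀ r' ∈ R, r ≠ r' → Disjoint (orbF r) (orbF r') := by
    intro r hr r' hr' hne
    rw [Finset.disjoint_left]
    intro b hb hb'
    have h1 : orbF b = orbF r := horb_trans r b hb
    have h2 : orbF b = orbF r' := horb_trans r' b hb'
    have h3 : orbF r = orbF r' := h1 ▸ h2
    have hr'r : r' ∈ orbF r := by
      rw [h3]
      exact hself r'
    have hrr' : r ∈ orbF r' := by
      rw [← h3]
      exact hself r
    have := ((hRmem r).1 hr).2 r' hr'r
    have := ((hRmem r').1 hr').2 r hrr'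
    omega
  have hRk : R.card ≤ k := by
    have hbU : (R.biUnion orbF).card = R.card * p := by
      rw [Finset.card_biUnion hdisj]
      rw [Finset.sum_congr rfl (fun r hr => ((hRmem r).1 hr).1)]
      rw [Finset.sum_const, smul_eq_mul]
    have hle : (R.biUnion orbF).card ≤ k * p := by
      calc (R.biUnion orbF).card ≤ (Finset.univ : Finset (Fin (k * p))).card :=
            Finset.card_le_univ _
        _ = k * p := by rw [Finset.card_univ, Fintype.card_fin]
    rw [hbU] at hle
    exact Nat.le_of_mul_le_mul_right hle (by omega)
  -- every moved point lies in the orbit of a (moved) representative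
  have hrep' : ∀ (v : Equiv.Perm (Fin (k * p))), v ∈ H → ∀ a, v a ≠ a →
      ∃ r ∈ R, a ∈ orbF r ∧ v r ≠ r := by
    intro v hv a hva
    have hne : (orbF a).Nonempty := ⟨a, hself a⟩
    set m := (orbF a).min' hne with hm
    have hmmem : m ∈ orbF a := (orbF a).min'_mem hne
    have horbm : orbF m = orbF a := horb_trans a m hmmem
    have hcard : (orbF a).card = p := (hCYC v hv a hva).1
    refine ⟨m, ?_, ?_, ?_⟩
    · rw [hRmem]
      constructor
      · rw [horbm]; exact hcard
      · intro b hb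
        rw [horbm] at hb
        exact (orbF a).min'_le b hb
    · rw [horbm]; exact hself a
    · exact hAON v hv a hva m hmmem
  -- support is the union of the orbits of moved representatives
  have hsupp_eq : ∀ (v : Equiv.Perm (Fin (k * p))), v ∈ H →
      v.support = (R.filter (fun r => v r ≠ r)).biUnion orbF := by
    intro v hv
    apply Finset.ext
    intro b
    constructor
    · intro hb
      have hvb : v b ≠ b := Equiv.Perm.mem_support.1 hb
      obtain ⟨r, hr, hbr, hvr⟩ := hrep' v hv b hvb
      exact Finset.mem_biUnion.2 ⟨r, Finset.mem_filter.2 ⟨hr, hvr⟩, hbr⟩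
    · intro hb
      obtain ⟨r, hr, hbr⟩ := Finset.mem_biUnion.1 hb
      have hvr : v r ≠ r := (Finset.mem_filter.1 hr).2
      exact Equiv.Perm.mem_support.2 (hAON v hv r hvr b hbr)
  -- moved-representative count equals the number of cycles
  have hSv_card : ∀ (v : Equiv.Perm (Fin (k * p))), v ∈ H →
      v.cycleType = Multiset.replicate j p →
      (R.filter (fun r => v r ≠ r)).card = j := by
    intro v hv hrep
    have hsc : v.support.card = j * p := by
      have h1 : v.cycleType.sum = v.support.card := Equiv.Perm.sum_cycleType v
      rw [hrep, Multiset.sum_replicate, smul_eq_mul] at h1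
      omega
    have hbU : v.support.card = (R.filter (fun r => v r ≠ r)).card * p := by
      rw [hsupp_eq v hv]
      rw [Finset.card_biUnion (fun r hr r' hr' hne =>
        hdisj r (Finset.mem_filter.1 hr).1 r' (Finset.mem_filter.1 hr').1 hne)]
      rw [Finset.sum_congr rfl (fun r hr => ((hRmem r).1 (Finset.mem_filter.1 hr).1).1)]
      rw [Finset.sum_const, smul_eq_mul]
    rw [hsc] at hbU
    exact (Nat.eq_of_mul_eq_mul_right (show 0 < p by omega) hbU.symm)
  -- agreement on orbits
  have hAGR : ∀ (v : Equiv.Perm (Fin (k * p))), v ∈ H → ∀ (w : Equiv.Perm (Fin (k * p))), w ∈ H →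
      ∀ r, v r = w r → ∀ b ∈ orbF r, v b = w b := by
    intro v hv w hw r hvw b hb
    set d := w⁻¹ * v with hd
    have hdH : d ∈ H := H.mul_mem (H.inv_mem hw) hv
    have hdr : d r = r := by
      rw [hd, Equiv.Perm.mul_apply, hvw]
      exact w.symm_apply_apply r
    have hdb : d b = b := by
      by_contra hcon
      have horbb : orbF b = orbF r := horb_trans r b hb
      have hrb : r ∈ orbF b := by
        rw [horbb]
        exact hself r
      exact hAON d hdH b hcon r hrb hdr
    have : w⁻¹ (v b) = b := by
      rw [hd, Equiv.Perm.mul_apply] at hdb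
      exact hdb
    calc v b = w (w⁻¹ (v b)) := (w.apply_symm_apply (v b)).symm
      _ = w b := by rw [this]
  -- the injection into subsets + functions
  set g : Finset (Fin (k * p)) → (↥R → Finset (Fin (k * p))) :=
    fun S r => if (r : Fin (k * p)) ∈ S then (orbF r.1).erase r.1 else {r.1} with hg
  set A : Finset (↥R → Fin (k * p)) :=
    (R.powersetCard j).biUnion (fun S => Fintype.piFinset (g S)) with hA
  have hinj : (Finset.univ.filter (fun v : Equiv.Perm (Fin (k * p)) =>
      v ∈ H ∧ v.cycleType = Multiset.replicate j p)).card ≤ A.card := by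
    apply Finset.card_le_card_of_injOn (fun v => (fun r : ↥R => v r.1))
    · intro v hv
      obtain ⟨hvH, hvtype⟩ := (Finset.mem_filter.1 hv).2
      rw [hA]
      apply Finset.mem_biUnion.2
      refine ⟨R.filter (fun r => v r ≠ r), ?_, ?_⟩
      · exact Finset.mem_powersetCard.2 ⟨Finset.filter_subset _ _, hSv_card v hvH hvtype⟩
      · apply Fintype.mem_piFinset.2
        intro r
        simp only [hg]
        by_cases hr : (r : Fin (k * p)) ∈ R.filter (fun r => v r ≠ r)
        · rw [if_pos hr]
          apply Finset.mem_erase.2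
          refine ⟨(Finset.mem_filter.1 hr).2, ?_⟩
          exact (horbF_mem r.1 (v r.1)).2 ⟨⟨v, hvH⟩, rfl⟩
        · rw [if_neg hr]
          have : ¬(v r.1 ≠ r.1) := by
            intro hcon
            exact hr (Finset.mem_filter.2 ⟨r.2, hcon⟩)
          push_neg at this
          rw [this]
          exact Finset.mem_singleton_self _
    · intro v hv w hw heq
      simp only [Finset.coe_filter, Set.mem_setOf_eq] at hv hw
      obtain ⟨hvH, hvtype⟩ := hv.2
      obtain ⟨hwH, hwtype⟩ := hw.2
      have heqr : ∀ r : ↥R, v r.1 = w r.1 := fun r => congrFun heq r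
      apply Equiv.ext
      intro x
      by_cases hx : v x ≠ x
      · obtain ⟨r, hr, hxr, hvr⟩ := hrep' v hvH x hx
        exact hAGR v hvH w hwH r (heqr ⟨r, hr⟩) x hxr
      · push_neg at hx
        by_cases hwx : w x ≠ x
        · obtain ⟨r, hr, hxr, hwr⟩ := hrep' w hwH x hwx
          have hvr : v r = w r := heqr ⟨r, hr⟩
          have hvrne : v r ≠ r := by
            rw [hvr]
            exact hwr
          exact absurd hx (hAON v hvH r hvrne x hxr)
        · push_neg at hwx
          rw [hx, hwx]
  -- cardinality of A
  have hAcard : A.card ≤ k.choose j * (p - 1) ^ j := by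
    rw [hA]
    calc ((R.powersetCard j).biUnion (fun S => Fintype.piFinset (g S))).card
        ≤ ∑ S ∈ R.powersetCard j, (Fintype.piFinset (g S)).card :=
          Finset.card_biUnion_le
      _ ≤ ∑ S ∈ R.powersetCard j, (p - 1) ^ j := by
          apply Finset.sum_le_sum
          intro S hS
          obtain ⟨hSR, hScard⟩ := Finset.mem_powersetCard.1 hS
          rw [Fintype.card_piFinset]
          have hprod : ∀ r : ↥R, (g S r).card = if (r : Fin (k * p)) ∈ S then p - 1 else 1 := by
            intro r
            simp only [hg]
            by_cases hr : (r : Fin (k * p)) ∈ S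
            · rw [if_pos hr, if_pos hr]
              rw [Finset.card_erase_of_mem (hself r.1)]
              rw [((hRmem r.1).1 r.2).1]
            · rw [if_neg hr, if_neg hr]
              exact Finset.card_singleton _
          rw [Finset.prod_congr rfl (fun r _ => hprod r)]
          rw [← Finset.prod_filter_mul_prod_filter_not Finset.univ
            (fun r : ↥R => (r : Fin (k * p)) ∈ S)]
          rw [Finset.prod_congr rfl (fun r hr => if_pos (Finset.mem_filter.1 hr).2)]
          rw [Finset.prod_congr rfl (fun r hr => if_neg (Finset.mem_filter.1 hr).2)]
          rw [Finset.prod_const, Finset.prod_const, one_pow, mul_one]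
          have hfc : (Finset.univ.filter (fun r : ↥R => (r : Fin (k * p)) ∈ S)).card = j := by
            rw [← hScard]
            exact Finset.card_bij (i := fun (r : {x // x ∈ R}) (_ : r ∈ Finset.univ.filter
                (fun r : {x // x ∈ R} => (r : Fin (k * p)) ∈ S)) => (r : Fin (k * p)))
              (fun r hr => (Finset.mem_filter.1 hr).2)
              (fun r _ r' _ hrr' => Subtype.ext hrr')
              (fun b hb => ⟨⟨b, hSR hb⟩, Finset.mem_filter.2 ⟨Finset.mem_univ _, hb⟩, rfl⟩)
          rw [hfc]
      _ = (R.powersetCard j).card * (p - 1) ^ j := by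
          rw [Finset.sum_const, smul_eq_mul]
      _ = R.card.choose j * (p - 1) ^ j := by rw [Finset.card_powersetCard]
      _ ≤ k.choose j * (p - 1) ^ j :=
          Nat.mul_le_mul_right _ (Nat.choose_le_choose _ hRk)
  exact le_trans hinj hAcard


end MaxDoset

open Finset MaxDoset in
/-- For a prime `p ≥ 3`, `1 ≤ k ≤ p-1` and `n = kp`, the number `n₂ₖ` of `(P,P)`-double
cosets of `S_n` of maximal size `p^{2k}` satisfies
`((kp)!/p^{2k})·(1 - 1/(p-2)!) ≤ n₂ₖ ≤ (kp)!/p^{2k}`. -/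
theorem max_size_doset_bounds {p k : ℕ} (hp : p.Prime) (hp3 : 3 ≤ p)
    (hk1 : 1 ≤ k) (hk2 : k ≤ p - 1)
    (P : Sylow p (Equiv.Perm (Fin (k * p))))
    (n2k : ℕ)
    (hn : n2k = Nat.card {S : Set (Equiv.Perm (Fin (k * p))) |
        (∃ x, S = DoubleCoset.doubleCoset x
          ((P : Subgroup (Equiv.Perm (Fin (k * p)))) : Set (Equiv.Perm (Fin (k * p))))
          ((P : Subgroup (Equiv.Perm (Fin (k * p)))) : Set (Equiv.Perm (Fin (k * p))))) ∧
        Nat.card S = p ^ (2 * k)}) :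
    ((k * p).factorial : ℚ) / (p : ℚ) ^ (2 * k) * (1 - 1 / ((p - 2).factorial : ℚ)) ≤ n2k ∧
      (n2k : ℚ) ≤ ((k * p).factorial : ℚ) / (p : ℚ) ^ (2 * k) := by
  classical
  haveI := Fact.mk hp
  set H : Subgroup (Equiv.Perm (Fin (k * p))) := (P : Subgroup (Equiv.Perm (Fin (k * p))))
    with hHdef
  have hp2 : 2 ≤ p := hp.two_le
  have hcardG : Nat.card (Equiv.Perm (Fin (k * p))) = (k * p).factorial := by
    rw [Nat.card_eq_fintype_card, Fintype.card_perm, Fintype.card_fin]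
  have hH : Nat.card H = p ^ k := by
    have h1 := Sylow.card_eq_multiplicity P
    rw [hcardG] at h1
    have h2 : ((k * p).factorial).factorization p = k := by
      rw [Nat.factorization_def _ hp]
      rw [mul_comm k p, padicValNat_factorial_mul]
      have h4 : padicValNat p (k.factorial) = 0 := by
        apply padicValNat.eq_zero_of_not_dvd
        rw [hp.dvd_factorial]
        omega
      rw [h4, zero_add]
    rw [h2] at h1
    exact h1
  have hp2kpos : 0 < p ^ (2 * k) := Nat.pow_pos (by omega)
  have hdoset : ∀ x, Nat.card (DoubleCoset.doubleCoset x (H : Set (Equiv.Perm (Fin (k * p)))) H)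
      * Nat.card (Ix H x) = p ^ (2 * k) := by
    intro x
    rw [doset_card_mul_card_Ix H x, hH, ← pow_add]
    congr 1
    ring
  have hmax_iff : ∀ x, Nat.card (DoubleCoset.doubleCoset x (H : Set (Equiv.Perm (Fin (k * p)))) H)
      = p ^ (2 * k) ↔ Ix H x = ⊥ := by
    intro x
    constructor
    · intro hmax
      rw [← Subgroup.card_eq_one]
      have h1 := hdoset x
      rw [hmax] at h1
      have h2 : p ^ (2 * k) * Nat.card (Ix H x) = p ^ (2 * k) * 1 := by
        rw [mul_one]; exact h1
      exact Nat.eq_of_mul_eq_mul_left hp2kpos h2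
    · intro hbot
      have h1 := hdoset x
      rw [hbot, Subgroup.card_bot, mul_one] at h1
      exact h1
  -- the collection of maximal double cosets
  have hfin : ({S : Set (Equiv.Perm (Fin (k * p))) |
      (∃ x, S = DoubleCoset.doubleCoset x (H : Set (Equiv.Perm (Fin (k * p)))) H) ∧
      Nat.card S = p ^ (2 * k)}).Finite := Set.toFinite _
  set tC := hfin.toFinset with htC
  have hn2k : n2k = tC.card := by
    rw [hn, Nat.card_coe_set_eq, Set.ncard_eq_toFinset_card _ hfin]
  set MaxF : Finset (Equiv.Perm (Fin (k * p))) :=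
    Finset.univ.filter (fun x => Ix H x = ⊥) with hMaxF
  have hcount : MaxF.card = tC.card * p ^ (2 * k) := by
    have hfib : ∀ x ∈ MaxF,
        (fun g => DoubleCoset.doubleCoset g (H : Set (Equiv.Perm (Fin (k * p)))) H) x ∈ tC := by
      intro x hx
      rw [htC, Set.Finite.mem_toFinset]
      exact ⟨⟨x, rfl⟩, (hmax_iff x).2 (Finset.mem_filter.1 hx).2⟩
    rw [Finset.card_eq_sum_card_fiberwise hfib]
    have hSfib : ∀ S ∈ tC, (MaxF.filter
        (fun g => DoubleCoset.doubleCoset g (H : Set (Equiv.Perm (Fin (k * p)))) H = S)).card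
        = p ^ (2 * k) := by
      intro S hS
      rw [htC, Set.Finite.mem_toFinset] at hS
      obtain ⟨⟨x₀, rfl⟩, hScard⟩ := hS
      have hSfin : (DoubleCoset.doubleCoset x₀ (H : Set (Equiv.Perm (Fin (k * p)))) H).Finite :=
        Set.toFinite _
      have hfeq : MaxF.filter (fun g =>
          DoubleCoset.doubleCoset g (H : Set (Equiv.Perm (Fin (k * p)))) H
            = DoubleCoset.doubleCoset x₀ (H : Set (Equiv.Perm (Fin (k * p)))) H)
          = hSfin.toFinset := by
        ext g
        rw [Set.Finite.mem_toFinset, Finset.mem_filter, hMaxF, Finset.mem_filter]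
        constructor
        · rintro ⟨_, hgd⟩
          rw [← hgd]
          exact DoubleCoset.mem_doubleCoset_self H H g
        · intro hg
          have hdg : DoubleCoset.doubleCoset g (H : Set (Equiv.Perm (Fin (k * p)))) H
              = DoubleCoset.doubleCoset x₀ (H : Set (Equiv.Perm (Fin (k * p)))) H :=
            DoubleCoset.doubleCoset_eq_of_mem hg
          refine ⟨⟨Finset.mem_univ _, ?_⟩, hdg⟩
          apply (hmax_iff g).1
          rw [hdg]
          exact hScard
      rw [hfeq]
      have hcc : hSfin.toFinset.card
          = Nat.card (DoubleCoset.doubleCoset x₀ (H : Set (Equiv.Perm (Fin (k * p)))) H) := by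
        rw [Nat.card_coe_set_eq, Set.ncard_eq_toFinset_card _ hSfin]
      rw [hcc, hScard]
    rw [Finset.sum_congr rfl hSfib, Finset.sum_const, smul_eq_mul]
  -- upper bound (ℕ)
  have hMle : MaxF.card ≤ (k * p).factorial := by
    calc MaxF.card ≤ (Finset.univ : Finset (Equiv.Perm (Fin (k * p)))).card :=
          Finset.card_le_univ _
      _ = (k * p).factorial := by
          rw [Finset.card_univ, ← Nat.card_eq_fintype_card, hcardG]
  have hupper_nat : n2k * p ^ (2 * k) ≤ (k * p).factorial := by
    rw [hn2k, ← hcount]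
    exact hMle
  -- the bad set
  set BF : Finset (Equiv.Perm (Fin (k * p))) :=
    Finset.univ.filter (fun x => ¬(Ix H x = ⊥)) with hBF
  have hMB : MaxF.card + BF.card = (k * p).factorial := by
    rw [hMaxF, hBF, Finset.card_filter_add_card_filter_not,
      Finset.card_univ, ← Nat.card_eq_fintype_card, hcardG]
  -- the key counting bound for p ≥ 5
  have hBF_bound : 5 ≤ p → (p - 2).factorial * BF.card ≤ (k * p).factorial := by
    intro hp5
    set pairs : Finset (Equiv.Perm (Fin (k * p)) × Equiv.Perm (Fin (k * p))) :=
      Finset.univ.filter (fun w => w.1 ∈ H ∧ w.1 ≠ 1 ∧ w.2 * w.1 * w.2⁻¹ ∈ H) with hpairs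
    have hsnd : ∀ w ∈ pairs, w.2 ∈ BF := by
      intro w hw
      obtain ⟨h1, h2, h3⟩ := (Finset.mem_filter.1 hw).2
      rw [hBF, Finset.mem_filter]
      refine ⟨Finset.mem_univ _, ?_⟩
      intro hbot
      have hmem : w.1 ∈ Ix H w.2 := mem_Ix.2 ⟨h1, h3⟩
      rw [hbot] at hmem
      exact h2 (Subgroup.mem_bot.1 hmem)
    have h4a : BF.card * (p - 1) ≤ pairs.card := by
      rw [Finset.card_eq_sum_card_fiberwise (f := Prod.snd) (t := BF) hsnd]
      have hge : ∀ x ∈ BF, p - 1 ≤ (pairs.filter (fun w => w.snd = x)).card := by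
        intro x hx
        have hxbot : ¬(Ix H x = ⊥) := (Finset.mem_filter.1 hx).2
        set IxF := Finset.univ.filter (fun u => u ∈ Ix H x) with hIxF
        have hIxcard : IxF.card = Nat.card (Ix H x) := by
          rw [Nat.card_eq_fintype_card]
          exact (Fintype.card_subtype _).symm
        have hIxp : p ≤ IxF.card := by
          have hdvd : Nat.card (Ix H x) ∣ p ^ k :=
            hH ▸ Subgroup.card_dvd_of_le (inf_le_left : Ix H x ≤ H)
          obtain ⟨i, hik, hi⟩ := (Nat.dvd_prime_pow hp).1 hdvd
          have hne1 : Nat.card (Ix H x) ≠ 1 := fun hcon => hxbot (Subgroup.card_eq_one.1 hcon)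
          have hi1 : 1 ≤ i := by
            rcases Nat.eq_zero_or_pos i with rfl | h
            · rw [pow_zero] at hi
              exact absurd hi hne1
            · exact h
          have hppow : p ^ 1 ≤ p ^ i := Nat.pow_le_pow_right (by omega) hi1
          rw [pow_one] at hppow
          omega
        have hfeq : pairs.filter (fun w => w.snd = x)
            = (IxF.erase 1).image (fun u => (u, x)) := by
          ext w
          rw [Finset.mem_filter, hpairs, Finset.mem_filter, Finset.mem_image]
          constructor
          · rintro ⟨⟨_, h1, h2, h3⟩, h4⟩
            refine ⟨w.1, ?_, ?_⟩
            · rw [Finset.mem_erase, hIxF, Finset.mem_filter]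
              refine ⟨h2, Finset.mem_univ _, mem_Ix.2 ⟨h1, ?_⟩⟩
              rw [← h4]
              exact h3
            · exact Prod.ext rfl h4.symm
          · rintro ⟨u, hu, rfl⟩
            rw [Finset.mem_erase, hIxF, Finset.mem_filter] at hu
            obtain ⟨hu1, _, hu2⟩ := hu
            obtain ⟨hu3, hu4⟩ := mem_Ix.1 hu2
            exact ⟨⟨Finset.mem_univ _, hu3, hu1, hu4⟩, rfl⟩
        rw [hfeq, Finset.card_image_of_injective _
          (fun a b hab => (Prod.ext_iff.1 hab).1),
          Finset.card_erase_of_mem]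
        · omega
        · rw [hIxF, Finset.mem_filter]
          exact ⟨Finset.mem_univ _, (Ix H x).one_mem⟩
      calc BF.card * (p - 1) = ∑ _x ∈ BF, (p - 1) := by
            rw [Finset.sum_const, smul_eq_mul]
        _ ≤ ∑ x ∈ BF, (pairs.filter (fun w => w.snd = x)).card := Finset.sum_le_sum hge
    set HF1 := Finset.univ.filter (fun u : Equiv.Perm (Fin (k * p)) => u ∈ H ∧ u ≠ 1)
      with hHF1
    have hfst : ∀ w ∈ pairs, w.1 ∈ HF1 := by
      intro w hw
      obtain ⟨h1, h2, _⟩ := (Finset.mem_filter.1 hw).2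
      rw [hHF1, Finset.mem_filter]
      exact ⟨Finset.mem_univ _, h1, h2⟩
    have hHF1card : HF1.card = p ^ k - 1 := by
      have hHFcard : (Finset.univ.filter
          (fun u : Equiv.Perm (Fin (k * p)) => u ∈ H)).card = p ^ k := by
        rw [← hH, Nat.card_eq_fintype_card]
        exact (Fintype.card_subtype _).symm
      have he : HF1 = (Finset.univ.filter
          (fun u : Equiv.Perm (Fin (k * p)) => u ∈ H)).erase 1 := by
        ext u
        rw [hHF1, Finset.mem_filter, Finset.mem_erase, Finset.mem_filter]
        tauto
      rw [he, Finset.card_erase_of_mem, hHFcard]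
      rw [Finset.mem_filter]
      exact ⟨Finset.mem_univ _, H.one_mem⟩
    have h4c : ∀ u ∈ HF1, (pairs.filter (fun w => w.fst = u)).card ≤ hfun p k 1 := by
      intro u hu
      rw [hHF1, Finset.mem_filter] at hu
      obtain ⟨_, huH, hu1⟩ := hu
      set Xu := Finset.univ.filter
        (fun x : Equiv.Perm (Fin (k * p)) => x * u * x⁻¹ ∈ H) with hXu
      have hfeq : pairs.filter (fun w => w.fst = u) = Xu.image (fun x => (u, x)) := by
        ext w
        rw [Finset.mem_filter, hpairs, Finset.mem_filter, Finset.mem_image]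
        constructor
        · rintro ⟨⟨_, h1, h2, h3⟩, h4⟩
          refine ⟨w.2, ?_, ?_⟩
          · rw [hXu, Finset.mem_filter]
            refine ⟨Finset.mem_univ _, ?_⟩
            rw [h4] at h3
            exact h3
          · exact Prod.ext h4.symm rfl
        · rintro ⟨y, hy, rfl⟩
          rw [hXu, Finset.mem_filter] at hy
          exact ⟨⟨Finset.mem_univ _, huH, hu1, hy.2⟩, rfl⟩
      have hfcard : (pairs.filter (fun w => w.fst = u)).card = Xu.card := by
        rw [hfeq]
        exact Finset.card_image_of_injective _
          (fun a b hab => (Prod.ext_iff.1 hab).2)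
      obtain ⟨hrep, hj1, hjk⟩ := cycleType_of_mem hp hk2 hH huH hu1
      set j := u.cycleType.card with hjdef
      have hXle : Xu.card ≤ hfun p k j := by
        set Vj := Finset.univ.filter (fun v : Equiv.Perm (Fin (k * p)) =>
          v ∈ H ∧ v.cycleType = Multiset.replicate j p) with hVj
        have hfib2 : ∀ x ∈ Xu, x * u * x⁻¹ ∈ Vj := by
          intro x hx
          rw [hVj, Finset.mem_filter]
          refine ⟨Finset.mem_univ _, (Finset.mem_filter.1 hx).2, ?_⟩
          rw [Equiv.Perm.cycleType_conj]
          exact hrep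
        rw [Finset.card_eq_sum_card_fiberwise
          (f := fun x => x * u * x⁻¹) (t := Vj) hfib2]
        set CuF := Finset.univ.filter
          (fun c : Equiv.Perm (Fin (k * p)) => c * u = u * c) with hCuF
        have hfibv : ∀ v ∈ Vj,
            (Xu.filter (fun x => x * u * x⁻¹ = v)).card ≤ CuF.card := by
          intro v hv
          rcases Finset.eq_empty_or_nonempty (Xu.filter (fun x => x * u * x⁻¹ = v))
            with he | hne
          · rw [he]
            simp
          · obtain ⟨x₀, hx₀⟩ := hne
            have hx₀v : x₀ * u * x₀⁻¹ = v := (Finset.mem_filter.1 hx₀).2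
            have hsub : Xu.filter (fun x => x * u * x⁻¹ = v)
                ⊆ CuF.image (fun c => x₀ * c) := by
              intro x hx
              have hxv : x * u * x⁻¹ = v := (Finset.mem_filter.1 hx).2
              apply Finset.mem_image.2
              refine ⟨x₀⁻¹ * x, ?_, by rw [mul_inv_cancel_left]⟩
              rw [hCuF, Finset.mem_filter]
              refine ⟨Finset.mem_univ _, ?_⟩
              have h2 : x * u = v * x := mul_inv_eq_iff_eq_mul.1 hxv
              have h3 : x₀ * u = v * x₀ := mul_inv_eq_iff_eq_mul.1 hx₀v
              have h4 : x₀⁻¹ * v = u * x₀⁻¹ := by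
                have h5 := congrArg (fun z => x₀⁻¹ * z * x₀⁻¹) h3
                rw [show x₀⁻¹ * (x₀ * u) * x₀⁻¹ = u * x₀⁻¹ by group,
                  show x₀⁻¹ * (v * x₀) * x₀⁻¹ = x₀⁻¹ * v by group] at h5
                exact h5.symm
              calc (x₀⁻¹ * x) * u = x₀⁻¹ * (x * u) := by rw [mul_assoc]
                _ = x₀⁻¹ * (v * x) := by rw [h2]
                _ = (x₀⁻¹ * v) * x := by rw [mul_assoc]
                _ = (u * x₀⁻¹) * x := by rw [h4]
                _ = u * (x₀⁻¹ * x) := by rw [mul_assoc]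
            calc (Xu.filter (fun x => x * u * x⁻¹ = v)).card
                ≤ (CuF.image (fun c => x₀ * c)).card := Finset.card_le_card hsub
              _ ≤ CuF.card := Finset.card_image_le
        calc ∑ v ∈ Vj, (Xu.filter (fun x => x * u * x⁻¹ = v)).card
            ≤ ∑ _v ∈ Vj, CuF.card := Finset.sum_le_sum hfibv
          _ = Vj.card * CuF.card := by rw [Finset.sum_const, smul_eq_mul]
          _ ≤ (k.choose j * (p - 1) ^ j) * ((j * p) ^ j * ((k - j) * p).factorial) := by
              apply Nat.mul_le_mul
              · have := structure_count hp hk1 hk2 hj1 hH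
                rw [hVj]
                convert this using 2
              · have := centralizer_card_le (by omega : 1 ≤ p) hj1 hjk hrep
                rw [hCuF]
                convert this using 2
          _ = hfun p k j := by
              unfold hfun
              ring
      rw [hfcard]
      calc Xu.card ≤ hfun p k j := hXle
        _ ≤ hfun p k 1 := hfun_le_one hp5 hj1 hjk hk2
    have h4b : pairs.card ≤ (p ^ k - 1) * hfun p k 1 := by
      rw [Finset.card_eq_sum_card_fiberwise (f := Prod.fst) (t := HF1) hfst]
      calc ∑ u ∈ HF1, (pairs.filter (fun w => w.fst = u)).card
          ≤ ∑ _u ∈ HF1, hfun p k 1 := Finset.sum_le_sum h4c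
        _ = HF1.card * hfun p k 1 := by rw [Finset.sum_const, smul_eq_mul]
        _ = (p ^ k - 1) * hfun p k 1 := by rw [hHF1card]
    have hf1 : hfun p k 1 = k * ((p - 1) * (p * ((k - 1) * p).factorial)) := by
      unfold hfun
      rw [Nat.choose_one_right, pow_one, pow_one, one_mul]
    have hchain : BF.card * (p - 1)
        ≤ ((p ^ k - 1) * k * p * ((k - 1) * p).factorial) * (p - 1) := by
      calc BF.card * (p - 1) ≤ pairs.card := h4a
        _ ≤ (p ^ k - 1) * hfun p k 1 := h4b
        _ = ((p ^ k - 1) * k * p * ((k - 1) * p).factorial) * (p - 1) := by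
            rw [hf1]
            ring
    have hBF2 : BF.card ≤ (p ^ k - 1) * k * p * ((k - 1) * p).factorial :=
      Nat.le_of_mul_le_mul_right hchain (by omega)
    calc (p - 2).factorial * BF.card
        ≤ (p - 2).factorial * ((p ^ k - 1) * k * p * ((k - 1) * p).factorial) :=
          Nat.mul_le_mul_left _ hBF2
      _ = (p ^ k - 1) * k * p * ((p - 2).factorial * ((k - 1) * p).factorial) := by
          ring
      _ ≤ (k * p).factorial := lemIV hp5 hk1 hk2
  -- final assembly
  have hppow_pos : (0 : ℚ) < (p : ℚ) ^ (2 * k) := by positivity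
  constructor
  · -- lower bound
    rcases Nat.lt_or_ge p 5 with hplt | hp5
    · -- p = 3
      have hp3' : p = 3 := by
        rcases Nat.lt_or_ge p 4 with h | h
        · omega
        · exfalso
          have h4 : p = 4 := by omega
          rw [h4] at hp
          norm_num at hp
      have : ((p - 2).factorial : ℚ) = 1 := by
        rw [hp3']
        norm_num
      rw [this]
      norm_num
    · -- p ≥ 5
      have hBQ := hBF_bound hp5
      have hfactpos : (0 : ℚ) < ((p - 2).factorial : ℚ) := by
        exact_mod_cast Nat.factorial_pos _
      have h1 : (BF.card : ℚ) ≤ ((k * p).factorial : ℚ) / ((p - 2).factorial : ℚ) := by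
        rw [le_div_iff₀ hfactpos]
        calc (BF.card : ℚ) * ((p - 2).factorial : ℚ)
            = (((p - 2).factorial * BF.card : ℕ) : ℚ) := by push_cast; ring
          _ ≤ (((k * p).factorial : ℕ) : ℚ) := by exact_mod_cast hBQ
      have hMQ : (n2k : ℚ) * (p : ℚ) ^ (2 * k) = (MaxF.card : ℚ) := by
        rw [hn2k]
        exact_mod_cast hcount.symm
      have hMBQ : (MaxF.card : ℚ) = ((k * p).factorial : ℚ) - (BF.card : ℚ) := by
        have := hMB
        have hq : (MaxF.card : ℚ) + (BF.card : ℚ) = ((k * p).factorial : ℚ) := by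
          exact_mod_cast this
        linarith
      rw [div_mul_eq_mul_div, div_le_iff₀ hppow_pos]
      have hexp : ((k * p).factorial : ℚ) * (1 - 1 / ((p - 2).factorial : ℚ))
          = ((k * p).factorial : ℚ) - ((k * p).factorial : ℚ) / ((p - 2).factorial : ℚ) := by
        field_simp
      rw [hexp, hMQ, hMBQ]
      linarith [h1]
  · -- upper bound
    rw [le_div_iff₀ hppow_pos]
    exact_mod_cast hupper_nat
end
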